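/- arXiv:0705.1469 — 10 statements merged into one kernel-verified Lean document; each statement's English description precedes it below -/
import Mathlib

section
/- Let β₁,…,β_p be real parameters and for each i let λ_i(x) = x_i(x_i+β_i). Let I_i be the ring automorphism of ℝ[x_1,…,x_p] determined by I_i(x_i) = -x_i-β_i and I_i(x_j) = x_j for j ≠ i. Then a polynomial q ∈ ℝ[x_1,…,x_p] satisfies I_i(q) = q for all i = 1,…,p if and only if q lies in the subring ℝ[λ_1,…,λ_p] generated by the λ_i. -/
open MvPolynomial

namespace RacahAux

variable {p : ℕ}

noncomputable def flip (i : Fin p) : MvPolynomial (Fin p) ℝ →ₐ[ℝ] MvPolynomial (Fin p) ℝ :=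
  aeval (fun j : Fin p => if j = i then -X i else X j)

lemma flip_X (i j : Fin p) : flip i (X j) = if j = i then -X i else X j := by
  simp [flip]

lemma flip_monomial (i : Fin p) (d : Fin p →₀ ℕ) (c : ℝ) :
    flip i (monomial d c) = (-1 : ℝ) ^ (d i) • monomial d c := by
  rw [monomial_eq, map_mul]
  have hC : flip i (C c) = C c := by simp [flip, algebraMap_eq]
  rw [hC, Finsupp.prod, map_prod]
  have h1 : ∀ n ∈ d.support, (flip i) (X n ^ d n)
      = (if n = i then (C ((-1:ℝ)^(d n))) else 1) * X n ^ d n := by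
    intro n _
    rw [map_pow, flip_X]
    split_ifs with h
    · subst h
      rw [neg_pow]
      simp [C_pow, map_neg, map_one, mul_comm]
    · simp
  rw [Finset.prod_congr rfl h1, Finset.prod_mul_distrib]
  rw [Finset.prod_ite_eq' d.support i (fun n => (C ((-1:ℝ)^(d n))))]
  by_cases hi : i ∈ d.support
  · simp only [hi, if_true]
    rw [smul_eq_C_mul]
    ring
  · have : d i = 0 := Finsupp.notMem_support_iff.mp hi
    simp [hi, this]

lemma coeff_flip (i : Fin p) (q : MvPolynomial (Fin p) ℝ) (e : Fin p →₀ ℕ) :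
    coeff e (flip i q) = (-1 : ℝ) ^ (e i) * coeff e q := by
  induction q using MvPolynomial.induction_on' with
  | monomial d c =>
      rw [flip_monomial, coeff_smul, coeff_monomial]
      by_cases h : d = e
      · subst h; simp [smul_eq_mul]
      · simp [h]

  | add f g hf hg =>
      rw [map_add, coeff_add, coeff_add, hf, hg, mul_add]


lemma mem_adjoin_sq (q : MvPolynomial (Fin p) ℝ)
    (h : ∀ i, flip i q = q) :
    q ∈ Algebra.adjoin ℝ (Set.range fun i : Fin p => (X i ^ 2 : MvPolynomial (Fin p) ℝ)) := by
  have heven : ∀ d ∈ q.support, ∀ i : Fin p, 2 ∣ d i := by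
    intro d hd i
    by_contra hodd
    have h1 : coeff d q = (-1 : ℝ)^(d i) * coeff d q := by
      conv_lhs => rw [← h i]
      rw [coeff_flip]
    have h2 : (-1:ℝ)^(d i) = -1 := Odd.neg_one_pow (Nat.odd_iff.mpr (by omega))
    rw [h2] at h1
    have h3 : coeff d q = 0 := by linarith
    exact (MvPolynomial.mem_support_iff.mp hd) h3
  rw [q.as_sum]
  apply Subalgebra.sum_mem
  intro d hd
  have key : (monomial d) (coeff d q)
      = C (coeff d q) * ∏ j ∈ d.support, (X j ^ 2) ^ (d j / 2) := by
    rw [monomial_eq, Finsupp.prod]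
    congr 1
    apply Finset.prod_congr rfl
    intro j _
    rw [← pow_mul]
    congr 1
    have := heven d hd j
    omega
  rw [key, ← algebraMap_eq]
  refine Subalgebra.mul_mem _ (Subalgebra.algebraMap_mem _ _)
    (Subalgebra.prod_mem _ fun j _ => Subalgebra.pow_mem _ ?_ _)
  exact Algebra.subset_adjoin ⟨j, rfl⟩


variable (β : Fin p → ℝ)

noncomputable def inv (i : Fin p) : MvPolynomial (Fin p) ℝ →ₐ[ℝ] MvPolynomial (Fin p) ℝ :=
  aeval (fun j : Fin p => if j = i then -X i - C (β i) else X j)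

noncomputable def sdown : MvPolynomial (Fin p) ℝ →ₐ[ℝ] MvPolynomial (Fin p) ℝ :=
  aeval (fun j : Fin p => X j - C (β j / 2))

noncomputable def sup : MvPolynomial (Fin p) ℝ →ₐ[ℝ] MvPolynomial (Fin p) ℝ :=
  aeval (fun j : Fin p => X j + C (β j / 2))

lemma sup_sdown (q : MvPolynomial (Fin p) ℝ) : sup β (sdown β q) = q := by
  have h : (sup β).comp (sdown β) = AlgHom.id ℝ _ := by
    apply MvPolynomial.algHom_ext
    intro i
    simp [sup, sdown, algebraMap_eq]
  exact DFunLike.congr_fun h q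

lemma sdown_inj : Function.Injective (sdown β) :=
  Function.LeftInverse.injective (sup_sdown β)

lemma conj (i : Fin p) : (sdown β).comp (inv β i) = (flip i).comp (sdown β) := by
  apply MvPolynomial.algHom_ext
  intro j
  simp only [AlgHom.comp_apply, inv, sdown, flip, aeval_X]
  split_ifs with h
  · subst h
    simp only [map_sub, map_neg, aeval_X, aeval_C, algebraMap_eq]
    rw [if_pos trivial]
    have hC : (C (β j) : MvPolynomial (Fin p) ℝ) = C (β j / 2) + C (β j / 2) := by
      rw [← C_add]; norm_num
    linear_combination -hC
  · simp only [map_sub, aeval_X, aeval_C, algebraMap_eq]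
    rw [if_neg h]

lemma inv_iff_flip (i : Fin p) (q : MvPolynomial (Fin p) ℝ) :
    inv β i q = q ↔ flip i (sdown β q) = sdown β q := by
  constructor
  · intro h
    have h2 := DFunLike.congr_fun (conj β i) q
    simp only [AlgHom.comp_apply, h] at h2
    exact h2.symm
  · intro h
    apply sdown_inj β
    have h2 := DFunLike.congr_fun (conj β i) q
    simp only [AlgHom.comp_apply] at h2
    rw [h2, h]

lemma sdown_lambda (i : Fin p) :
    sdown β (X i ^ 2 + C (β i) * X i) = X i ^ 2 - C (β i ^ 2 / 4) := by
  have h1 : (C (β i) : MvPolynomial (Fin p) ℝ) = 2 * C (β i / 2) := by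
    rw [two_mul, ← C_add]; norm_num
  have h2 : (C (β i ^ 2 / 4) : MvPolynomial (Fin p) ℝ) = C (β i / 2) ^ 2 := by
    rw [← C_pow]; congr 1; ring
  simp only [sdown, map_add, map_mul, map_pow, aeval_X, aeval_C, algebraMap_eq]
  rw [h1, h2]
  ring

lemma adjoin_shift_eq :
    Algebra.adjoin ℝ (Set.range fun i : Fin p => (X i ^ 2 - C (β i ^ 2 / 4) : MvPolynomial (Fin p) ℝ))
      = Algebra.adjoin ℝ (Set.range fun i : Fin p => (X i ^ 2 : MvPolynomial (Fin p) ℝ)) := by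
  apply le_antisymm <;> apply Algebra.adjoin_le <;> rintro _ ⟨i, rfl⟩
  · have h1 : (X i ^ 2 : MvPolynomial (Fin p) ℝ)
        ∈ Algebra.adjoin ℝ (Set.range fun i : Fin p => (X i ^ 2 : MvPolynomial (Fin p) ℝ)) :=
      Algebra.subset_adjoin ⟨i, rfl⟩
    have h2 := Subalgebra.algebraMap_mem
      (Algebra.adjoin ℝ (Set.range fun i : Fin p => (X i ^ 2 : MvPolynomial (Fin p) ℝ))) (β i ^ 2 / 4)
    rw [algebraMap_eq] at h2
    exact sub_mem h1 h2
  · have h1 : (X i ^ 2 - C (β i ^ 2 / 4) : MvPolynomial (Fin p) ℝ)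
        ∈ Algebra.adjoin ℝ (Set.range fun i : Fin p => (X i ^ 2 - C (β i ^ 2 / 4) : MvPolynomial (Fin p) ℝ)) :=
      Algebra.subset_adjoin ⟨i, rfl⟩
    have h2 := Subalgebra.algebraMap_mem
      (Algebra.adjoin ℝ (Set.range fun i : Fin p => (X i ^ 2 - C (β i ^ 2 / 4) : MvPolynomial (Fin p) ℝ))) (β i ^ 2 / 4)
    rw [algebraMap_eq] at h2
    show (X i ^ 2 : MvPolynomial (Fin p) ℝ) ∈ _
    have h3 : (X i ^ 2 : MvPolynomial (Fin p) ℝ) = (X i ^ 2 - C (β i ^ 2 / 4)) + C (β i ^ 2 / 4) := by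
      ring
    rw [h3]
    exact add_mem h1 h2

lemma inv_lambda (i j : Fin p) :
    inv β i (X j ^ 2 + C (β j) * X j) = X j ^ 2 + C (β j) * X j := by
  simp only [inv, map_add, map_mul, map_pow, aeval_X, aeval_C, algebraMap_eq]
  split_ifs with h
  · subst h
    ring
  · rfl

end RacahAux

/-- A polynomial `q ∈ ℝ[x_1,…,x_p]` is invariant under all the
involutions `I_i` (sending `x_i ↦ -x_i - C (β i)` and fixing the other variables)
iff it lies in the subring generated by the `λ_i = x_i(x_i + β_i)`. -/
theorem racah_invariance_iff_mem_lambda_subring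
    (p : ℕ) (β : Fin p → ℝ) (q : MvPolynomial (Fin p) ℝ) :
    (∀ i : Fin p,
        aeval (fun j : Fin p => if j = i then -X i - C (β i) else X j) q = q)
      ↔ q ∈ Algebra.adjoin ℝ
          (Set.range fun i : Fin p => X i ^ 2 + C (β i) * X i) := by
  constructor
  · intro h
    have hflip : ∀ i, RacahAux.flip i (RacahAux.sdown β q) = RacahAux.sdown β q :=
      fun i => (RacahAux.inv_iff_flip β i q).mp (h i)
    have hmem := RacahAux.mem_adjoin_sq _ hflip
    rw [← RacahAux.adjoin_shift_eq β] at hmem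
    have himg : RacahAux.sdown β ''
          (Set.range fun i : Fin p => (X i ^ 2 + C (β i) * X i : MvPolynomial (Fin p) ℝ))
        = Set.range fun i : Fin p => (X i ^ 2 - C (β i ^ 2 / 4) : MvPolynomial (Fin p) ℝ) := by
      rw [← Set.range_comp]
      apply congrArg Set.range
      funext i
      simpa only [Function.comp_apply] using RacahAux.sdown_lambda β i
    rw [← himg, ← AlgHom.map_adjoin, Subalgebra.mem_map] at hmem
    obtain ⟨a, ha, hae⟩ := hmem
    rwa [← RacahAux.sdown_inj β hae]
  · intro h i
    have hle : Algebra.adjoin ℝ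
          (Set.range fun i : Fin p => (X i ^ 2 + C (β i) * X i : MvPolynomial (Fin p) ℝ))
        ≤ AlgHom.equalizer (RacahAux.inv β i) (AlgHom.id ℝ _) := by
      apply Algebra.adjoin_le
      rintro _ ⟨j, rfl⟩
      exact RacahAux.inv_lambda β i j
    exact hle h
end

section
/- For λ(x) = x(x+β) and n ≥ 1, the polynomial λ(x+1)ⁿ - λ(x)ⁿ equals (2x+β+1)·(n x^{2n-2} + n(n-1)(β+1) x^{2n-3} + lower order terms), i.e. the quotient (λ(x+1)ⁿ - λ(x)ⁿ)/(2x+β+1) is a polynomial of degree 2n-2 with leading coefficient n and next coefficient n(n-1)(β+1). -/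
open Polynomial Finset

lemma lam_B_monic (β : ℝ) : (X ^ 2 + C β * X : ℝ[X]).Monic := by
  monicity!

lemma lam_B_natDegree (β : ℝ) : (X ^ 2 + C β * X : ℝ[X]).natDegree = 2 := by
  compute_degree!

lemma lam_B_nextCoeff (β : ℝ) : (X ^ 2 + C β * X : ℝ[X]).nextCoeff = β := by
  rw [nextCoeff_of_natDegree_pos (by rw [lam_B_natDegree]; norm_num), lam_B_natDegree]
  simp [coeff_X]

lemma lam_A_eq (β : ℝ) :
    ((X + 1) ^ 2 + C β * (X + 1) : ℝ[X]) = X ^ 2 + C (β + 2) * X + C (β + 1) := by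
  simp only [C_add, map_ofNat, C_1]
  ring

lemma lam_A_monic (β : ℝ) : ((X + 1) ^ 2 + C β * (X + 1) : ℝ[X]).Monic := by
  rw [lam_A_eq]; monicity!

lemma lam_A_natDegree (β : ℝ) : ((X + 1) ^ 2 + C β * (X + 1) : ℝ[X]).natDegree = 2 := by
  rw [lam_A_eq]; compute_degree!

lemma lam_A_nextCoeff (β : ℝ) : ((X + 1) ^ 2 + C β * (X + 1) : ℝ[X]).nextCoeff = β + 2 := by
  rw [nextCoeff_of_natDegree_pos (by rw [lam_A_natDegree]; norm_num), lam_A_natDegree, lam_A_eq]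
  simp [coeff_X, coeff_one]

/-- For `λ(x) = x(x+β)` and `n ≥ 1`,
`λ(x+1)ⁿ - λ(x)ⁿ = (2x+β+1)(n x^{2n-2} + n(n-1)(β+1) x^{2n-3} + lower order)`,
where "lower order" means degree at most `2n-4` (i.e. degree `< 2n-3`). -/
theorem lambda_pow_difference_expansion (β : ℝ) (n : ℕ) (hn : 1 ≤ n) :
    ∃ q r : Polynomial ℝ,
      ((X + 1) ^ 2 + C β * (X + 1)) ^ n - (X ^ 2 + C β * X) ^ n
          = (2 * X + C (β + 1)) * q
      ∧ q = C (n : ℝ) * X ^ (2 * n - 2)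
            + C ((n : ℝ) * ((n : ℝ) - 1) * (β + 1)) * X ^ (2 * n - 3) + r
      ∧ r.degree < ((2 * n - 3 : ℕ) : WithBot ℕ) := by
  set A : ℝ[X] := (X + 1) ^ 2 + C β * (X + 1) with hAdef
  set B : ℝ[X] := X ^ 2 + C β * X with hBdef
  have hAB : A - B = 2 * X + C (β + 1) := by
    rw [hAdef, hBdef]
    simp only [C_add, C_1]
    ring
  set q : ℝ[X] := ∑ i ∈ range n, A ^ i * B ^ (n - 1 - i) with hqdef
  have hfact : A ^ n - B ^ n = (2 * X + C (β + 1)) * q := by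
    rw [← hAB, ← geom_sum₂_mul A B n, mul_comm]
  -- handle n = 1 separately
  rcases eq_or_lt_of_le hn with h1 | h2
  · refine ⟨q, 0, hfact, ?_, ?_⟩
    · rw [hqdef, ← h1]
      simp
    · rw [← h1]
      simp
  -- now n ≥ 2
  have hn2 : 2 ≤ n := h2
  set c : ℝ := (n : ℝ) * ((n : ℝ) - 1) * (β + 1) with hcdef
  refine ⟨q, q - C (n : ℝ) * X ^ (2 * n - 2) - C c * X ^ (2 * n - 3), hfact, by ring, ?_⟩
  -- each term is monic of degree 2n-2
  have hM : ∀ i ∈ range n, (A ^ i * B ^ (n - 1 - i)).Monic := fun i _ =>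
    ((lam_A_monic β).pow i).mul ((lam_B_monic β).pow _)
  have hMdeg : ∀ i ∈ range n, (A ^ i * B ^ (n - 1 - i)).natDegree = 2 * n - 2 := by
    intro i hi
    rw [((lam_A_monic β).pow i).natDegree_mul ((lam_B_monic β).pow _),
      (lam_A_monic β).natDegree_pow, (lam_B_monic β).natDegree_pow,
      lam_A_natDegree, lam_B_natDegree]
    have := mem_range.mp hi
    omega
  -- coefficients of q
  have hcoeff_top : ∀ m : ℕ, 2 * n - 2 < m → q.coeff m = 0 := by
    intro m hm
    rw [hqdef, finset_sum_coeff]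
    refine Finset.sum_eq_zero fun i hi => ?_
    exact coeff_eq_zero_of_natDegree_lt (by rw [hMdeg i hi]; exact hm)
  have hcoeff_lead : q.coeff (2 * n - 2) = (n : ℝ) := by
    rw [hqdef, finset_sum_coeff]
    have : ∀ i ∈ range n, (A ^ i * B ^ (n - 1 - i)).coeff (2 * n - 2) = 1 := by
      intro i hi
      have := (hM i hi).coeff_natDegree
      rwa [hMdeg i hi] at this
    rw [Finset.sum_congr rfl this]
    simp
  have hcoeff_next : q.coeff (2 * n - 3) = c := by
    rw [hqdef, finset_sum_coeff]
    have key : ∀ i ∈ range n,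
        (A ^ i * B ^ (n - 1 - i)).coeff (2 * n - 3)
          = 2 * (i : ℝ) + ((n : ℝ) - 1) * β := by
      intro i hi
      have hi' := mem_range.mp hi
      have hpos : 0 < (A ^ i * B ^ (n - 1 - i)).natDegree := by
        rw [hMdeg i hi]; omega
      have h3 : 2 * n - 3 = (A ^ i * B ^ (n - 1 - i)).natDegree - 1 := by
        rw [hMdeg i hi]; omega
      rw [h3, ← nextCoeff_of_natDegree_pos hpos,
        ((lam_A_monic β).pow i).nextCoeff_mul ((lam_B_monic β).pow _),
        (lam_A_monic β).nextCoeff_pow, (lam_B_monic β).nextCoeff_pow,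
        lam_A_nextCoeff, lam_B_nextCoeff]
      have hcast : ((n - 1 - i : ℕ) : ℝ) = (n : ℝ) - 1 - (i : ℝ) := by
        have : n - 1 - i = n - 1 - i := rfl
        push_cast [Nat.cast_sub (by omega : i ≤ n - 1), Nat.cast_sub (by omega : 1 ≤ n)]
        ring
      rw [nsmul_eq_mul, nsmul_eq_mul, hcast]
      ring
    rw [Finset.sum_congr rfl key, Finset.sum_add_distrib, Finset.sum_const, ← Finset.mul_sum]
    have hgauss : (∑ i ∈ range n, (i : ℝ)) = (n : ℝ) * ((n : ℝ) - 1) / 2 := by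
      have h := Finset.sum_range_id_mul_two n
      have : ((∑ i ∈ range n, i) * 2 : ℕ) = ((n * (n - 1) : ℕ)) := h
      have h2 : ((∑ i ∈ range n, (i : ℝ))) * 2 = (n : ℝ) * ((n : ℝ) - 1) := by
        have := congrArg (Nat.cast : ℕ → ℝ) this
        push_cast [Nat.cast_sub (by omega : 1 ≤ n)] at this
        linarith [this]
      linarith
    rw [hgauss, hcdef]
    simp only [card_range, nsmul_eq_mul]
    ring
  -- degree bound
  rw [degree_lt_iff_coeff_zero]
  intro m hm
  have hm' : 2 * n - 3 ≤ m := by exact_mod_cast hm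
  simp only [coeff_sub, coeff_C_mul, coeff_X_pow]
  rcases lt_trichotomy m (2 * n - 2) with h | h | h
  · have hm3 : m = 2 * n - 3 := by omega
    rw [hm3, hcoeff_next, if_neg (by omega), if_pos rfl]
    ring
  · rw [h, hcoeff_lead, if_pos rfl, if_neg (by omega)]
    ring
  · rw [hcoeff_top m h, if_neg (by omega), if_neg (by omega)]
    ring
end

section
/- Let M, p be positive integers and let S_M = {ν ∈ ℕ₀^p : |ν| ≤ M}, where |ν| = ν₁+⋯+ν_p. Then the determinant of the matrix indexed by ν, m ∈ S_M with entries binom(2m, ν) = ∏_{i=1}^p binom(2m_i, ν_i) equals 2^{p·binom(M+p, p+1)}. -/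
open Finset
lemma hsG (p q : ℕ) : ∀ n, (∑ t ∈ range (n+1), (t+p).choose q) + p.choose (q+1) = (n+p+1).choose (q+1) := by
  intro n
  induction n with
  | zero => simp [Nat.choose_succ_succ]
  | succ n ih =>
    rw [sum_range_succ, add_right_comm, ih, show n+1+p = n+p+1 by omega, add_comm,
      ← Nat.choose_succ_succ]
lemma hs1 (p n : ℕ) : (∑ t ∈ range (n+1), ((n-t)+p).choose p) = (n+p+1).choose (p+1) := by
  have h := hsG p p n
  rw [Nat.choose_eq_zero_of_lt (by omega), add_zero] at h
  rw [← h, ← Finset.sum_range_reflect]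
  refine Finset.sum_congr rfl fun i hi => ?_
  simp only [mem_range] at hi; congr 2; omega
lemma hs2 (p n : ℕ) : (∑ t ∈ range (n+1), ((n-t)+p).choose (p+1)) = (n+p+1).choose (p+2) := by
  have h := hsG p (p+1) n
  rw [Nat.choose_eq_zero_of_lt (by omega), add_zero] at h
  rw [show (p+2) = p+1+1 by rfl, ← h, ← Finset.sum_range_reflect]
  refine Finset.sum_congr rfl fun i hi => ?_
  simp only [mem_range] at hi; congr 2; omega
lemma fB (p : ℕ) : ∀ M, (∑ t ∈ range (M+1), t * ((M-t)+p).choose p) = (M+p+1).choose (p+2) := by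
  intro M
  induction M with
  | zero => simp [Nat.choose_eq_zero_of_lt]
  | succ M ih =>
    rw [Finset.sum_range_succ']
    simp only [Nat.succ_sub_succ]
    have h1 : ∑ i ∈ range (M+1), (i+1) * ((M-i)+p).choose p
        = (∑ i ∈ range (M+1), i * ((M-i)+p).choose p) + ∑ i ∈ range (M+1), ((M-i)+p).choose p := by
      rw [← Finset.sum_add_distrib]; congr 1; ext i; ring
    rw [h1, ih, hs1, zero_mul, add_zero]
    have h2 : (M+1+p+1).choose (p+2) = (M+p+1).choose (p+1) + (M+p+1).choose (p+2) := by
      rw [show M+1+p+1 = (M+p+1)+1 by omega, show p+2=(p+1)+1 by rfl, Nat.choose_succ_succ]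
    omega

def Sfin (p M : ℕ) : Finset (Fin p → ℕ) :=
  (Fintype.piFinset fun _ => Finset.Iic M).filter (fun ν => ∑ i, ν i ≤ M)

lemma mem_Sfin {p M : ℕ} {ν : Fin p → ℕ} : ν ∈ Sfin p M ↔ ∑ i, ν i ≤ M := by
  constructor
  · intro h; exact (Finset.mem_filter.1 h).2
  · intro h
    refine Finset.mem_filter.2 ⟨Fintype.mem_piFinset.2 fun i => ?_, h⟩
    exact Finset.mem_Iic.2 (le_trans (Finset.single_le_sum (f := ν) (fun j _ => Nat.zero_le _) (Finset.mem_univ i)) h)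

lemma sum_Sfin_succ (p M : ℕ) {A : Type*} [AddCommMonoid A] (F : (Fin (p+1) → ℕ) → A) :
    ∑ ν ∈ Sfin (p+1) M, F ν = ∑ t ∈ range (M+1), ∑ μ ∈ Sfin p (M-t), F (Fin.cons t μ) := by
  rw [Finset.sum_sigma' (range (M+1)) (fun t => Sfin p (M-t)) (fun t μ => F (Fin.cons t μ))]
  refine Finset.sum_bij' (fun ν _ => (⟨ν 0, Fin.tail ν⟩ : (_ : ℕ) × (Fin p → ℕ))) (fun x _ => Fin.cons x.1 x.2) ?_ ?_ ?_ ?_ ?_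
  · intro ν hν
    rw [mem_Sfin, Fin.sum_univ_succ] at hν
    have htail : ∑ i, Fin.tail ν i = ∑ i : Fin p, ν i.succ := rfl
    simp only [Finset.mem_sigma, Finset.mem_range, mem_Sfin]
    omega
  · rintro ⟨t, μ⟩ hx
    rw [Finset.mem_sigma, mem_range, mem_Sfin] at hx
    rw [mem_Sfin, Fin.sum_cons]
    omega
  · intro ν _; exact Fin.cons_self_tail ν
  · rintro ⟨t, μ⟩ _; simp [Fin.tail_cons]
  · intro ν _; rw [Fin.cons_self_tail]

lemma cardSfin : ∀ p M : ℕ, (Sfin p M).card = (M+p).choose p := by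
  intro p
  induction p with
  | zero =>
    intro M
    have : Sfin 0 M = {(fun i => 0 : Fin 0 → ℕ)} := by
      ext ν; simp [mem_Sfin]; ext i; exact absurd i.2 (by omega)
    simp [this]
  | succ p ih =>
    intro M
    have h := sum_Sfin_succ p M (fun _ => (1 : ℕ))
    rw [Finset.card_eq_sum_ones, h]
    simp only [← Finset.card_eq_sum_ones, ih]
    rw [hs1, show M+p+1 = M+(p+1) by omega]

lemma countSfin : ∀ p M : ℕ, (∑ ν ∈ Sfin p M, ∑ i, ν i) = p * (M+p).choose (p+1) := by
  intro p
  induction p with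
  | zero => intro M; simp
  | succ p ih =>
    intro M
    rw [sum_Sfin_succ p M (fun ν => ∑ i, ν i)]
    have h1 : ∀ t μ, (∑ i, (Fin.cons t μ : Fin (p+1) → ℕ) i) = t + ∑ i, μ i := by
      intro t μ; exact Fin.sum_cons t μ
    simp only [h1]
    have h2 : ∀ t ∈ range (M+1), (∑ μ ∈ Sfin p (M-t), (t + ∑ i, μ i))
        = t * ((M-t)+p).choose p + p * ((M-t)+p).choose (p+1) := by
      intro t _
      rw [Finset.sum_add_distrib, Finset.sum_const, smul_eq_mul, cardSfin, ih, mul_comm]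
    rw [Finset.sum_congr rfl h2, Finset.sum_add_distrib, fB, ← Finset.mul_sum, hs2]
    have : M + (p+1) = M + p + 1 := by omega
    rw [this]; ring


def lcoef (ν k : ℕ) : ℕ := if k ≤ ν then (Nat.choose k (ν - k)) * 2^(2*k - ν) else 0

lemma lcoef_self (ν : ℕ) : lcoef ν ν = 2 ^ ν := by
  simp [lcoef]; omega

lemma lcoef_eq_zero {ν k : ℕ} (h : ¬ k ≤ ν) : lcoef ν k = 0 := by simp [lcoef, h]

open Polynomial in
lemma key_poly (m ν : ℕ) : (2*m).choose ν = ∑ k ∈ range (m+1), lcoef ν k * m.choose k := by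
  have h : ((1+X : ℕ[X]))^(2*m) = (X*(X + C 2) + 1)^m := by
    rw [pow_mul]; congr 1; ring_nf; norm_num
  have h2 := congrArg (fun q => Polynomial.coeff q ν) h
  simp only [coeff_one_add_X_pow, Nat.cast_id] at h2
  rw [add_pow] at h2
  simp only [one_pow, mul_one, finset_sum_coeff] at h2
  rw [h2]
  refine Finset.sum_congr rfl fun k hk => ?_
  rw [mul_pow, show X^k * (X + C 2)^k * ((m.choose k : ℕ) : ℕ[X]) = (X + C 2)^k * ((m.choose k : ℕ) : ℕ[X]) * X^k from by ring,
    coeff_mul_X_pow', ← Polynomial.C_eq_natCast, coeff_mul_C, coeff_X_add_C_pow]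
  by_cases hkν : k ≤ ν
  · simp only [if_pos hkν, lcoef, if_pos hkν]
    by_cases h2k : ν ≤ 2*k
    · rw [show k - (ν - k) = 2*k - ν by omega]; simp only [Nat.cast_id]; ring
    · rw [Nat.choose_eq_zero_of_lt (by omega)]; simp
  · simp [if_neg hkν, lcoef_eq_zero hkν]

lemma key_scalar (m ν N : ℕ) (hν : ν ≤ N) :
    (2*m).choose ν = ∑ k ∈ Finset.Iic N, lcoef ν k * m.choose k := by
  rw [key_poly]
  have e1 : ∑ k ∈ range (m+1), lcoef ν k * m.choose k
      = ∑ k ∈ range (m+N+2), lcoef ν k * m.choose k := by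
    refine Finset.sum_subset (Finset.range_subset_range.2 (by omega)) fun x _ hx => ?_
    rw [Finset.mem_range, not_lt] at hx
    rw [Nat.choose_eq_zero_of_lt (by omega), mul_zero]
  have e2 : ∑ k ∈ Finset.Iic N, lcoef ν k * m.choose k
      = ∑ k ∈ range (m+N+2), lcoef ν k * m.choose k := by
    rw [← Nat.Iio_eq_range]
    refine Finset.sum_subset (fun x hx => Finset.mem_Iio.2 (by have := Finset.mem_Iic.1 hx; omega)) fun x _ hx => ?_
    rw [Finset.mem_Iic, not_le] at hx
    rw [lcoef_eq_zero (by omega), zero_mul]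
  rw [e1, ← e2]


lemma sum_iota {M p : ℕ} {ι : Type} [Fintype ι] [DecidableEq ι]
    (e : ι ≃ {ν : Fin p → ℕ // (∑ i, ν i) ≤ M}) {A : Type*} [AddCommMonoid A]
    (g : (Fin p → ℕ) → A) :
    ∑ k : ι, g ((e k).1) = ∑ x ∈ Sfin p M, g x := by
  refine Finset.sum_bij' (fun k _ => (e k).1) (fun x hx => e.symm ⟨x, mem_Sfin.1 hx⟩) ?_ ?_ ?_ ?_ ?_
  · intro k _; exact mem_Sfin.2 (e k).2
  · intro x hx; exact Finset.mem_univ _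
  · intro k _; simp
  · intro x hx; simp
  · intro k _; rfl

lemma entry_eq {M p : ℕ} (ν m : Fin p → ℕ) (hν : ∑ i, ν i ≤ M) :
    (∏ i, (2 * m i).choose (ν i))
      = ∑ x ∈ Sfin p M, ∏ i, lcoef (ν i) (x i) * (m i).choose (x i) := by
  have hνi : ∀ i, ν i ≤ M := fun i =>
    le_trans (Finset.single_le_sum (f := ν) (fun j _ => Nat.zero_le _) (Finset.mem_univ i)) hν
  have h1 : (∏ i, (2 * m i).choose (ν i))
      = ∏ i, ∑ k ∈ Finset.Iic M, lcoef (ν i) k * (m i).choose k :=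
    Finset.prod_congr rfl fun i _ => key_scalar (m i) (ν i) M (hνi i)
  rw [h1, Finset.prod_univ_sum]
  symm
  refine Finset.sum_subset (Finset.filter_subset _ _) fun x hx hxn => ?_
  rw [Sfin, Finset.mem_filter, not_and] at hxn
  have hxM : ¬ (∑ i, x i ≤ M) := hxn hx
  have : ∃ i, ¬ x i ≤ ν i := by
    by_contra hc
    push_neg at hc
    exact hxM (le_trans (Finset.sum_le_sum fun i _ => hc i) hν)
  obtain ⟨i, hi⟩ := this
  exact Finset.prod_eq_zero (Finset.mem_univ i) (by rw [lcoef_eq_zero hi, zero_mul])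

/-- For `S_M = {ν ∈ ℕ₀^p : |ν| ≤ M}`, the determinant of the matrix
with entries `binom(2m, ν) = ∏ᵢ C(2mᵢ, νᵢ)` (rows/columns indexed by `S_M`)
equals `2^{p·C(M+p, p+1)}`. -/
theorem det_binom_two_m_nu
    (M p : ℕ) (hM : 0 < M) (hp : 0 < p)
    (ι : Type) [Fintype ι] [DecidableEq ι]
    (e : ι ≃ {ν : Fin p → ℕ // (∑ i, ν i) ≤ M}) :
    Matrix.det (Matrix.of fun ν m : ι =>
        ∏ i : Fin p, ((Nat.choose (2 * (e m).1 i) ((e ν).1 i) : ℕ) : ℝ))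
      = 2 ^ (p * Nat.choose (M + p) (p + 1)) := by
  classical
  set f : ι → Lex (ℕ × Fin (Fintype.card ι)) :=
    fun k => toLex (∑ i, (e k).1 i, Fintype.equivFin ι k) with hfdef
  have hf : Function.Injective f := by
    intro a b h
    have h2 := congrArg (fun x => (ofLex x).2) h
    exact (Fintype.equivFin ι).injective h2
  letI : LinearOrder ι := LinearOrder.lift' f hf
  have hlt : ∀ a b : ι, a < b ↔ f a < f b := by
    intro a b
    rw [lt_iff_le_not_ge, lt_iff_le_not_ge]
    exact Iff.rfl
  -- the order property
  have hkey : ∀ a b : ι, (∀ t, (e b).1 t ≤ (e a).1 t) → ¬ (a < b) := by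
    intro a b hab hlt'
    rcases eq_or_ne a b with rfl | hne
    · exact lt_irrefl a hlt'
    · have hne' : ∃ t, (e b).1 t < (e a).1 t := by
        by_contra hc
        push_neg at hc
        have : (e a).1 = (e b).1 := funext fun t => le_antisymm (hc t) (hab t)
        exact hne (e.injective (Subtype.ext this))
      obtain ⟨t, ht⟩ := hne'
      have hsum : ∑ i, (e b).1 i < ∑ i, (e a).1 i :=
        Finset.sum_lt_sum (fun i _ => hab i) ⟨t, Finset.mem_univ t, ht⟩
      have : f b < f a := by
        rw [hfdef]
        exact Prod.Lex.lt_iff.2 (Or.inl hsum)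
      exact lt_asymm this ((hlt a b).1 hlt')
  set L : Matrix ι ι ℝ :=
    Matrix.of (fun ν k : ι => ((∏ i, lcoef ((e ν).1 i) ((e k).1 i) : ℕ) : ℝ)) with hLdef
  set U : Matrix ι ι ℝ :=
    Matrix.of (fun k m : ι => ((∏ i, Nat.choose ((e m).1 i) ((e k).1 i) : ℕ) : ℝ)) with hUdef
  have hBLU : (Matrix.of fun ν m : ι =>
      ∏ i : Fin p, ((Nat.choose (2 * (e m).1 i) ((e ν).1 i) : ℕ) : ℝ)) = L * U := by
    ext ν m
    rw [Matrix.mul_apply]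
    have h0 := entry_eq (M := M) ((e ν).1) ((e m).1) (e ν).2
    calc (Matrix.of fun ν m : ι =>
        ∏ i : Fin p, ((Nat.choose (2 * (e m).1 i) ((e ν).1 i) : ℕ) : ℝ)) ν m
        = ((∏ i, (2 * (e m).1 i).choose ((e ν).1 i) : ℕ) : ℝ) := by
          simp [Nat.cast_prod]
      _ = ((∑ x ∈ Sfin p M, ∏ i, lcoef ((e ν).1 i) (x i) * ((e m).1 i).choose (x i) : ℕ) : ℝ) := by
          rw [h0]
      _ = ∑ x ∈ Sfin p M,
            ((∏ i, lcoef ((e ν).1 i) (x i) * ((e m).1 i).choose (x i) : ℕ) : ℝ) := by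
          push_cast; rfl
      _ = ∑ k : ι,
            ((∏ i, lcoef ((e ν).1 i) ((e k).1 i) * ((e m).1 i).choose ((e k).1 i) : ℕ) : ℝ) :=
          (sum_iota e fun x =>
            ((∏ i, lcoef ((e ν).1 i) (x i) * ((e m).1 i).choose (x i) : ℕ) : ℝ)).symm
      _ = ∑ k : ι, L ν k * U k m := by
          refine Finset.sum_congr rfl fun k _ => ?_
          rw [hLdef, hUdef]
          simp only [Matrix.of_apply]
          rw [Finset.prod_mul_distrib]
          push_cast
          ring
  have hU_tri : U.BlockTriangular id := by
    intro i j hij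
    by_cases hc : ∀ t, (e i).1 t ≤ (e j).1 t
    · exact absurd hij (hkey j i hc)
    · push_neg at hc
      obtain ⟨t, ht⟩ := hc
      have hz : ((e j).1 t).choose ((e i).1 t) = 0 := Nat.choose_eq_zero_of_lt ht
      show ((∏ i', Nat.choose ((e j).1 i') ((e i).1 i') : ℕ) : ℝ) = 0
      rw [Finset.prod_eq_zero (Finset.mem_univ t) hz, Nat.cast_zero]
  have hL_tri : L.BlockTriangular OrderDual.toDual := by
    intro i j hij
    have hij' : i < j := hij
    by_cases hc : ∀ t, (e j).1 t ≤ (e i).1 t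
    · exact absurd hij' (hkey i j hc)
    · push_neg at hc
      obtain ⟨t, ht⟩ := hc
      have hz : lcoef ((e i).1 t) ((e j).1 t) = 0 := lcoef_eq_zero (by omega)
      show ((∏ i', lcoef ((e i).1 i') ((e j).1 i') : ℕ) : ℝ) = 0
      rw [Finset.prod_eq_zero (Finset.mem_univ t) hz, Nat.cast_zero]
  rw [hBLU, Matrix.det_mul, Matrix.det_of_upperTriangular hU_tri,
    Matrix.det_of_lowerTriangular L hL_tri]
  have hUdiag : ∀ a : ι, U a a = 1 := by
    intro a
    show ((∏ i', Nat.choose ((e a).1 i') ((e a).1 i') : ℕ) : ℝ) = 1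
    simp [Nat.choose_self]
  have hLdiag : ∀ a : ι, L a a = ((2 ^ (∑ i, (e a).1 i) : ℕ) : ℝ) := by
    intro a
    show ((∏ i', lcoef ((e a).1 i') ((e a).1 i') : ℕ) : ℝ) = _
    congr 1
    simp only [lcoef_self]
    rw [Finset.prod_pow_eq_pow_sum]
  simp only [hUdiag, hLdiag, Finset.prod_const_one, mul_one]
  have hsum : ∑ a : ι, ∑ i, (e a).1 i = p * (M + p).choose (p + 1) := by
    rw [sum_iota e (fun x => ∑ i, x i), countSfin]
  push_cast
  rw [Finset.prod_pow_eq_pow_sum, hsum]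
end

section
/- For positive integers M, p and an indeterminate z, the identity ∏_{k=1}^{M} binom(z,k)^{binom(M-k+p-1, p-1)} = (∏_{j=0}^{M-1} (z-j)^{binom(M-j+p-1, p)}) / (∏_{i=1}^{M} i^{binom(M+p-i, p)}) holds as an identity of rational functions (or for all real z). -/
lemma hs_range (q : ℕ) : ∀ n : ℕ, ∑ m ∈ Finset.range n, Nat.choose (m + q) q = Nat.choose (n + q) (q + 1)
  | 0 => by simp [Nat.choose_eq_zero_of_lt]
  | n + 1 => by
    rw [Finset.sum_range_succ, hs_range q n, show n + 1 + q = (n + q) + 1 by ring,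
      Nat.choose_succ_succ (n + q) q]
    simp [Nat.succ_eq_add_one, Nat.add_comm]

lemma sum_icc_choose (q N i : ℕ) (hi : i ≤ N) :
    ∑ k ∈ Finset.Icc i N, Nat.choose (N - k + q) q = Nat.choose (N - i + q + 1) (q + 1) := by
  have : ∑ k ∈ Finset.Icc i N, Nat.choose (N - k + q) q
      = ∑ m ∈ Finset.range (N - i + 1), Nat.choose (m + q) q := by
    apply Finset.sum_nbij' (fun k => N - k) (fun m => N - m)
    · intro a ha; simp only [Finset.mem_Icc] at ha; simp only [Finset.mem_range]; omega
    · intro a ha; simp only [Finset.mem_range] at ha; simp only [Finset.mem_Icc]; omega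
    · intro a ha; simp only [Finset.mem_Icc] at ha; omega
    · intro a ha; simp only [Finset.mem_range] at ha; omega
    · intro a ha; rfl
  rw [this, hs_range]
  congr 1
  omega

/-- Generalized binomial coefficient `binom(z,k) = z(z-1)⋯(z-k+1)/k!`. -/
noncomputable def gbinom (z : ℝ) (k : ℕ) : ℝ :=
  (∏ j ∈ Finset.range k, (z - (j : ℝ))) / (Nat.factorial k : ℝ)

/-- For `M, p ≥ 1` and all real `z`,
`∏_{k=1}^{M} binom(z,k)^{C(M-k+p-1,p-1)}
  = (∏_{j=0}^{M-1} (z-j)^{C(M-j+p-1,p)}) / (∏_{i=1}^{M} i^{C(M+p-i,p)})`. -/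
theorem prod_gbinom_pow_eq (M p : ℕ) (hM : 0 < M) (hp : 0 < p) (z : ℝ) :
    ∏ k ∈ Finset.Icc 1 M, gbinom z k ^ Nat.choose (M - k + p - 1) (p - 1)
      = (∏ j ∈ Finset.range M, (z - (j : ℝ)) ^ Nat.choose (M - j + p - 1) p)
        / (∏ i ∈ Finset.Icc 1 M, (i : ℝ) ^ Nat.choose (M + p - i) p) := by
  obtain ⟨q, rfl⟩ : ∃ q, p = q + 1 := ⟨p - 1, by omega⟩
  -- rewrite each factor
  have step1 : ∀ k ∈ Finset.Icc 1 M,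
      gbinom z k ^ Nat.choose (M - k + (q + 1) - 1) (q + 1 - 1)
        = (∏ j ∈ Finset.range k, (z - (j : ℝ)) ^ Nat.choose (M - k + q) q)
          / (∏ i ∈ Finset.Icc 1 k, (i : ℝ) ^ Nat.choose (M - k + q) q) := by
    intro k hk
    simp only [Finset.mem_Icc] at hk
    have h1 : M - k + (q + 1) - 1 = M - k + q := by omega
    have h2 : q + 1 - 1 = q := by omega
    have h3 : (Nat.factorial k : ℝ) = ∏ i ∈ Finset.Icc 1 k, (i : ℝ) := by
      rw [← Nat.cast_prod]
      congr 1
      rw [← Finset.prod_Ico_id_eq_factorial, Finset.Ico_add_one_right_eq_Icc]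
    rw [h1, h2, gbinom, h3, div_pow, Finset.prod_pow, Finset.prod_pow]
  rw [Finset.prod_congr rfl step1, Finset.prod_div_distrib]
  congr 1
  · -- numerator
    rw [Finset.prod_comm' (t' := Finset.range M) (s' := fun j => Finset.Icc (j + 1) M)
      (by intro k j; simp only [Finset.mem_Icc, Finset.mem_range]; omega)]
    apply Finset.prod_congr rfl
    intro j hj
    simp only [Finset.mem_range] at hj
    rw [Finset.prod_pow_eq_pow_sum, sum_icc_choose q M (j + 1) (by omega)]
    congr 2
    omega
  · -- denominator
    rw [Finset.prod_comm' (t' := Finset.Icc 1 M) (s' := fun i => Finset.Icc i M)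
      (by intro k i; simp only [Finset.mem_Icc]; omega)]
    apply Finset.prod_congr rfl
    intro i hi
    simp only [Finset.mem_Icc] at hi
    rw [Finset.prod_pow_eq_pow_sum, sum_icc_choose q M i (by omega)]
    congr 2
    omega
end

section
/- Let V be a finite set in ℤ^p, ρ : V → ℝ a weight, and define ⟨f,g⟩ = ∑_{x∈V} f(x)g(x)ρ(x). Let L be a difference operator L f(x) = ∑_{ν∈S} C_ν(x) f(x+ν) with S ⊂ ℤ^p finite and symmetric about the origin. If (i) ρ(x)C_ν(x) = ρ(x+ν)C_{-ν}(x+ν) whenever x, x+ν ∈ V, and (ii) C_ν(x) = 0 whenever x ∈ V but x+ν ∉ V (for every ν ≠ 0 in S), then ⟨Lf, g⟩ = ⟨f, Lg⟩ for all functions f, g on ℤ^p. -/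
/-- A difference operator `L f(x) = ∑_{ν∈S} C_ν(x) f(x+ν)` on a
finite set `V ⊂ ℤ^p`, with `S` symmetric about the origin, satisfying
(i) `ρ(x)C_ν(x) = ρ(x+ν)C_{-ν}(x+ν)` whenever `x, x+ν ∈ V`, and
(ii) `C_ν(x) = 0` whenever `x ∈ V` but `x+ν ∉ V`, is self-adjoint for the
inner product `⟨f,g⟩ = ∑_{x∈V} f(x)g(x)ρ(x)`. -/
theorem difference_operator_selfadjoint
    (p : ℕ) (V : Finset (Fin p → ℤ)) (ρ : (Fin p → ℤ) → ℝ)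
    (S : Finset (Fin p → ℤ)) (hS : ∀ ν ∈ S, -ν ∈ S)
    (Cc : (Fin p → ℤ) → (Fin p → ℤ) → ℝ)
    (h1 : ∀ ν ∈ S, ν ≠ 0 → ∀ x : Fin p → ℤ, x ∈ V → x + ν ∈ V →
      ρ x * Cc ν x = ρ (x + ν) * Cc (-ν) (x + ν))
    (h2 : ∀ ν ∈ S, ν ≠ 0 → ∀ x ∈ V, x + ν ∉ V → Cc ν x = 0)
    (f g : (Fin p → ℤ) → ℝ) :
    ∑ x ∈ V, (∑ ν ∈ S, Cc ν x * f (x + ν)) * g x * ρ x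
      = ∑ x ∈ V, f x * (∑ ν ∈ S, Cc ν x * g (x + ν)) * ρ x := by
  have key : ∀ x ∈ V, ∀ ν ∈ S, x + ν ∉ V → Cc ν x = 0 := by
    intro x hx ν hν hxv
    by_cases h : ν = 0
    · exact absurd hx (by simpa [h] using hxv)
    · exact h2 ν hν h x hx hxv
  have L : ∀ x ∈ V, (∑ ν ∈ S, Cc ν x * f (x + ν)) * g x * ρ x
      = ∑ ν ∈ S, Cc ν x * f (x + ν) * g x * ρ x := by
    intro x _; rw [Finset.sum_mul, Finset.sum_mul]
  have R : ∀ x ∈ V, f x * (∑ ν ∈ S, Cc ν x * g (x + ν)) * ρ x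
      = ∑ ν ∈ S, Cc ν x * g (x + ν) * f x * ρ x := by
    intro x _
    rw [Finset.mul_sum, Finset.sum_mul]
    exact Finset.sum_congr rfl fun ν _ => by ring
  rw [Finset.sum_congr rfl L, Finset.sum_congr rfl R,
    ← Finset.sum_product' (f := fun x ν => Cc ν x * f (x + ν) * g x * ρ x),
    ← Finset.sum_product' (f := fun x ν => Cc ν x * g (x + ν) * f x * ρ x)]
  have hLf : ∑ q ∈ V ×ˢ S, Cc q.2 q.1 * f (q.1 + q.2) * g q.1 * ρ q.1
      = ∑ q ∈ (V ×ˢ S).filter (fun q => q.1 + q.2 ∈ V),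
          Cc q.2 q.1 * f (q.1 + q.2) * g q.1 * ρ q.1 := by
    refine (Finset.sum_filter_of_ne ?_).symm
    intro q hq hne
    rw [Finset.mem_product] at hq
    by_contra hxv
    exact hne (by rw [key q.1 hq.1 q.2 hq.2 hxv]; ring)
  have hRg : ∑ q ∈ V ×ˢ S, Cc q.2 q.1 * g (q.1 + q.2) * f q.1 * ρ q.1
      = ∑ q ∈ (V ×ˢ S).filter (fun q => q.1 + q.2 ∈ V),
          Cc q.2 q.1 * g (q.1 + q.2) * f q.1 * ρ q.1 := by
    refine (Finset.sum_filter_of_ne ?_).symm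
    intro q hq hne
    rw [Finset.mem_product] at hq
    by_contra hxv
    exact hne (by rw [key q.1 hq.1 q.2 hq.2 hxv]; ring)
  rw [hLf, hRg]
  refine Finset.sum_nbij' (fun q => (q.1 + q.2, -q.2)) (fun q => (q.1 + q.2, -q.2))
    ?_ ?_ ?_ ?_ ?_
  · intro q hq
    simp only [Finset.mem_filter, Finset.mem_product] at hq ⊢
    exact ⟨⟨hq.2, hS q.2 hq.1.2⟩, by simpa using hq.1.1⟩
  · intro q hq
    simp only [Finset.mem_filter, Finset.mem_product] at hq ⊢
    exact ⟨⟨hq.2, hS q.2 hq.1.2⟩, by simpa using hq.1.1⟩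
  · intro q hq; simp
  · intro q hq; simp
  · intro q hq
    simp only [Finset.mem_filter, Finset.mem_product] at hq
    obtain ⟨⟨hx, hν⟩, hxv⟩ := hq
    by_cases h : q.2 = 0
    · simp only [h, add_zero, neg_zero]; ring
    · have := h1 q.2 hν h q.1 hx hxv
      simp only [add_neg_cancel_right]
      calc Cc q.2 q.1 * f (q.1 + q.2) * g q.1 * ρ q.1
          = (ρ q.1 * Cc q.2 q.1) * f (q.1 + q.2) * g q.1 := by ring
        _ = (ρ (q.1 + q.2) * Cc (-q.2) (q.1 + q.2)) * f (q.1 + q.2) * g q.1 := by rw [this]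
        _ = Cc (-q.2) (q.1 + q.2) * g q.1 * f (q.1 + q.2) * ρ (q.1 + q.2) := by ring
end

section
/- Define the map f sending (x̃, ñ, β̃) ∈ ℝ^p × ℝ^p × ℝ^{p+2} to (x, n, β) by: x_i = Ñ₁^{p+1-i} + β̃_{p+2-i} - β̃₀ + N - 1 for i=1,…,p (where Ñ₁^j = ñ₁+⋯+ñ_j); n₁ = x̃_p + β̃_p + N; n_i = x̃_{p+1-i} - x̃_{p+2-i} + β̃_{p+1-i} - β̃_{p+2-i} for i=2,…,p; β₀ = β̃₀; β_i = β̃₀ - β̃_{p+2-i} - 2N + 1 for i=1,…,p+1. Then f is a bijection of ℝ^{3p+2} onto itself and f is an involution, i.e. f ∘ f = id. -/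
private lemma sumconv (p k : ℕ) (hk : k ≤ p) (G : ℕ → ℝ) :
    ∑ j ∈ Finset.range p, (if j < k then G j else 0) = ∑ j ∈ Finset.range k, G j := by
  rw [← Finset.sum_filter]
  congr 1
  ext a
  simp only [Finset.mem_filter, Finset.mem_range]
  omega

private lemma tel0 (p k : ℕ) (hk : k ≤ p) (G : ℕ → ℝ) :
    (∑ j : Fin p, if (j : ℕ) < k then G (j : ℕ) else 0) = ∑ j ∈ Finset.range k, G j := by
  rw [Fin.sum_univ_eq_sum_range (fun a => if a < k then G a else 0) p]
  exact sumconv p k hk G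

private lemma telrange (p : ℕ) (hp : 0 < p) (X B : ℕ → ℝ) (N : ℝ) :
    ∀ k, 1 ≤ k → k ≤ p →
      ∑ j ∈ Finset.range k,
        (if h : j = 0 then X (p - 1) + B p + N
         else X (p - j - 1) - X (p - j) + B (p - j) - B (p + 1 - j))
        = X (p - k) + B (p + 1 - k) + N := by
  intro k
  induction k with
  | zero => intro h _; exact absurd h (by omega)
  | succ n ih =>
    intro _ hkp
    rcases Nat.eq_zero_or_pos n with h0 | h0
    · subst h0
      rw [Finset.sum_range_one, dif_pos rfl, show p + 1 - 1 = p from by omega]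
    · rw [Finset.sum_range_succ, ih (by omega) (by omega), dif_neg (by omega : ¬ n = 0)]
      rw [show p - (n + 1) = p - n - 1 from by omega,
          show p + 1 - (n + 1) = p - n from by omega]
      ring

private lemma tel (p : ℕ) (hp : 0 < p) (X B : ℕ → ℝ) (N : ℝ) (k : ℕ)
    (hk1 : 1 ≤ k) (hkp : k ≤ p) :
    (∑ j : Fin p, if (j : ℕ) < k then
        (if h : (j : ℕ) = 0 then X (p - 1) + B p + N
         else X (p - (j : ℕ) - 1) - X (p - (j : ℕ)) + B (p - (j : ℕ)) - B (p + 1 - (j : ℕ)))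
      else 0) = X (p - k) + B (p + 1 - k) + N :=
  (tel0 p k hkp _).trans (telrange p hp X B N k hk1 hkp)

/-- The duality map `f : (x̃, ñ, β̃) ↦ (x, n, β)` defined by
`x_i = Ñ₁^{p+1-i} + β̃_{p+2-i} - β̃₀ + N - 1` (`i = 1,…,p`),
`n₁ = x̃_p + β̃_p + N`,
`n_i = x̃_{p+1-i} - x̃_{p+2-i} + β̃_{p+1-i} - β̃_{p+2-i}` (`i = 2,…,p`),
`β₀ = β̃₀`, `β_i = β̃₀ - β̃_{p+2-i} - 2N + 1` (`i = 1,…,p+1`)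
is a bijection of `ℝ^{3p+2}` and an involution.
(Lean index `i : Fin p` corresponds to the subscript `i+1`; a `Fin (p+2)` index
`j` corresponds to the subscript `j`.) -/
theorem racah_duality_map_involutive_bijection
    (p : ℕ) (hp : 0 < p) (N : ℝ)
    (f : ((Fin p → ℝ) × (Fin p → ℝ) × (Fin (p + 2) → ℝ)) →
         ((Fin p → ℝ) × (Fin p → ℝ) × (Fin (p + 2) → ℝ)))
    (hf : ∀ (xt nt : Fin p → ℝ) (bt : Fin (p + 2) → ℝ),
      f (xt, nt, bt) =
        ( fun i : Fin p =>
            (∑ j : Fin p, if (j : ℕ) < p - (i : ℕ) then nt j else 0)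
              + bt ⟨p + 1 - (i : ℕ), by omega⟩ - bt 0 + N - 1,
          fun i : Fin p =>
            if h : (i : ℕ) = 0 then
              xt ⟨p - 1, by omega⟩ + bt ⟨p, by omega⟩ + N
            else
              xt ⟨p - (i : ℕ) - 1, by omega⟩ - xt ⟨p - (i : ℕ), by omega⟩
                + bt ⟨p - (i : ℕ), by omega⟩ - bt ⟨p + 1 - (i : ℕ), by omega⟩,
          fun j : Fin (p + 2) =>
            if h : (j : ℕ) = 0 then bt 0
            else bt 0 - bt ⟨p + 2 - (j : ℕ), by omega⟩ - 2 * N + 1 )) :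
    Function.Bijective f ∧ f ∘ f = id := by
  have hinv : ∀ q, f (f q) = q := by
    rintro ⟨xt, nt, bt⟩
    rw [hf, hf]
    obtain ⟨X, hX⟩ : ∃ X : ℕ → ℝ, ∀ (a : ℕ) (h : a < p), xt ⟨a, h⟩ = X a :=
      ⟨fun a => if h : a < p then xt ⟨a, h⟩ else 0, fun a h => by simp only [dif_pos h]⟩
    obtain ⟨B, hB⟩ : ∃ B : ℕ → ℝ, ∀ (a : ℕ) (h : a < p + 2), bt ⟨a, h⟩ = B a :=
      ⟨fun a => if h : a < p + 2 then bt ⟨a, h⟩ else 0, fun a h => by simp only [dif_pos h]⟩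
    obtain ⟨Nt, hNt⟩ : ∃ G : ℕ → ℝ, ∀ j : Fin p, nt j = G (j : ℕ) :=
      ⟨fun a => if h : a < p then nt ⟨a, h⟩ else 0, fun j => by simp only [dif_pos j.isLt, Fin.eta]⟩
    have hB0 : bt 0 = B 0 := by
      have h2 : (0 : Fin (p + 2)) = ⟨0, by omega⟩ := by ext; simp
      rw [h2, hB]
    simp only [Prod.mk.injEq]
    refine ⟨funext fun i => ?_, funext fun i => ?_, funext fun j => ?_⟩
    · obtain ⟨i, hi⟩ := i
      simp only [hX, hB, hNt, hB0, Fin.val_mk, Fin.val_zero]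
      rw [tel p hp X B N (p - i) (by omega) (by omega)]
      rw [dif_neg (show ¬(p + 1 - i = 0) by omega),
          dif_pos trivial]
      rw [show p - (p - i) = i from by omega,
          show p + 1 - (p - i) = i + 1 from by omega,
          show p + 2 - (p + 1 - i) = i + 1 from by omega]
      ring
    · obtain ⟨i, hi⟩ := i
      simp only [hX, hB, hNt, hB0, Fin.val_mk, Fin.val_zero]
      rcases Nat.eq_zero_or_pos i with h0 | h0
      · subst h0
        rw [dif_pos rfl]
        rw [tel0 p (p - (p - 1)) (by omega) Nt]
        rw [dif_neg (show ¬(p = 0) by omega)]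
        rw [show p - (p - 1) = 1 from by omega, Finset.sum_range_one,
            show p + 1 - (p - 1) = 2 from by omega,
            show p + 2 - p = 2 from by omega]
        ring
      · rw [dif_neg (show ¬(i = 0) by omega)]
        rw [tel0 p (p - (p - i - 1)) (by omega) Nt,
            tel0 p (p - (p - i)) (by omega) Nt]
        rw [dif_neg (show ¬(p - i = 0) by omega),
            dif_neg (show ¬(p + 1 - i = 0) by omega)]
        rw [show p - (p - i - 1) = i + 1 from by omega,
            show p - (p - i) = i from by omega,
            show p + 1 - (p - i - 1) = i + 2 from by omega,
            show p + 1 - (p - i) = i + 1 from by omega,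
            show p + 2 - (p - i) = i + 2 from by omega,
            show p + 2 - (p + 1 - i) = i + 1 from by omega,
            Finset.sum_range_succ]
        ring
    · obtain ⟨j, hj⟩ := j
      simp only [hB, hB0, Fin.val_mk, Fin.val_zero]
      rcases Nat.eq_zero_or_pos j with h0 | h0
      · subst h0
        simp
      · rw [dif_neg (show ¬(j = 0) by omega)]
        rw [dif_pos trivial]
        rw [dif_neg (show ¬(p + 2 - j = 0) by omega)]
        rw [show p + 2 - (p + 2 - j) = j from by omega]
        ring
  exact ⟨Function.Involutive.bijective hinv, funext fun q => hinv q⟩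
end

section
/- Double application of Whipple's transformation: for a nonnegative integer n and a terminating Saalschützian ₄F₃, (u)_n(v)_n(w)_n · ₄F₃(-n, x, y, z; u, v, w; 1) = (1-x-n)_n (1-v+y-n)_n (1-v+z-n)_n · ₄F₃(-n, w-x, u-x, 1-v-n; 1-x-n, 1-v+y-n, 1-v+z-n; 1), under the Saalschützian condition u+v+w = -n+x+y+z+1 and nonvanishing of all relevant Pochhammer denominators. -/
/-- Pochhammer symbol `(a)_n = a(a+1)⋯(a+n-1)` for real `a`. -/
noncomputable def poch (a : ℝ) (n : ℕ) : ℝ := ∏ j ∈ Finset.range n, (a + (j : ℝ))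

/-- Terminating hypergeometric sum
`₄F₃(-n, a, b, c; d, e, f; 1) = ∑_{k=0}^n ((-n)_k(a)_k(b)_k(c)_k)/((d)_k(e)_k(f)_k k!)`. -/
noncomputable def F43 (n : ℕ) (a b c d e f : ℝ) : ℝ :=
  ∑ k ∈ Finset.range (n + 1),
    poch (-(n : ℝ)) k * poch a k * poch b k * poch c k
      / (poch d k * poch e k * poch f k * (Nat.factorial k : ℝ))

open Finset

lemma poch_zero (a : ℝ) : poch a 0 = 1 := by simp [poch]

lemma poch_succ (a : ℝ) (n : ℕ) : poch a (n+1) = poch a n * (a + n) := by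
  simp [poch, Finset.prod_range_succ]

lemma poch_add (a : ℝ) (m k : ℕ) : poch a (m + k) = poch a m * poch (a + m) k := by
  rw [poch, poch, poch, Finset.prod_range_add]
  congr 1
  refine Finset.prod_congr rfl fun j _ => by push_cast; ring

lemma poch_reflect (a : ℝ) (n : ℕ) : poch a n = (-1)^n * poch (1 - a - n) n := by
  rw [poch, poch, ← Finset.prod_range_reflect]
  rw [show ((-1:ℝ))^n = ∏ _j ∈ Finset.range n, (-1 : ℝ) by simp, ← Finset.prod_mul_distrib]
  refine Finset.prod_congr rfl fun j hj => ?_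
  rw [Finset.mem_range] at hj
  have : ((n - 1 - j : ℕ) : ℝ) = (n : ℝ) - 1 - j := by
    have h1 : j + 1 ≤ n := hj
    push_cast [Nat.cast_sub (by omega : j ≤ n - 1), Nat.cast_sub (by omega : 1 ≤ n)]
    ring
  rw [this]; ring

lemma vandermonde (s t : ℝ) (n : ℕ) :
    poch (s + t) n = ∑ i ∈ range (n+1), (n.choose i : ℝ) * poch s i * poch t (n - i) := by
  induction n with
  | zero => simp [poch_zero]
  | succ n ih =>
    rw [poch_succ, ih, Finset.sum_mul]
    have expand : ∀ i ∈ range (n+1),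
        (n.choose i : ℝ) * poch s i * poch t (n - i) * (s + t + n)
          = ((n.choose i : ℝ) * poch s (i+1) * poch t (n - i))
            + ((n.choose i : ℝ) * poch s i * poch t (n - i + 1)) := by
      intro i hi
      rw [mem_range] at hi
      have hi' : i ≤ n := by omega
      have h1 : poch s (i+1) = poch s i * (s + i) := poch_succ s i
      have h2 : poch t (n - i + 1) = poch t (n - i) * (t + (n - i : ℕ)) := poch_succ t (n-i)
      have h3 : ((n - i : ℕ) : ℝ) = (n : ℝ) - i := by
        rw [Nat.cast_sub hi']
      rw [h1, h2, h3]; ring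
    rw [Finset.sum_congr rfl expand, Finset.sum_add_distrib]
    -- first sum: shift index
    have shift : ∑ i ∈ range (n+1), (n.choose i : ℝ) * poch s (i+1) * poch t (n - i)
        = ∑ i ∈ range (n+2), (if i = 0 then 0 else (n.choose (i-1) : ℝ)) * poch s i * poch t (n + 1 - i) := by
      conv_rhs => rw [Finset.sum_range_succ']
      simp only [Nat.succ_ne_zero, if_false, Nat.add_sub_cancel]
      simp only [if_true, zero_mul, add_zero]
      refine Finset.sum_congr rfl fun i hi => ?_
      have h6 : n + 1 - (i + 1) = n - i := by omega
      rw [h6]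
    have second : ∑ i ∈ range (n+1), (n.choose i : ℝ) * poch s i * poch t (n - i + 1)
        = ∑ i ∈ range (n+2), (if i = n+1 then 0 else (n.choose i : ℝ)) * poch s i * poch t (n + 1 - i) := by
      conv_rhs => rw [Finset.sum_range_succ]
      rw [if_pos rfl, zero_mul, zero_mul, add_zero]
      refine Finset.sum_congr rfl fun i hi => ?_
      rw [mem_range] at hi
      have h4 : i ≠ n + 1 := by omega
      have h5 : n - i + 1 = n + 1 - i := by omega
      rw [if_neg h4, h5]
    rw [shift, second, ← Finset.sum_add_distrib]
    refine Finset.sum_congr rfl fun i hi => ?_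
    rw [mem_range] at hi
    have : ((n+1).choose i : ℝ)
        = (if i = 0 then 0 else (n.choose (i-1) : ℝ)) + (if i = n+1 then 0 else (n.choose i : ℝ)) := by
      rcases Nat.eq_zero_or_pos i with h | h
      · subst h; simp
      · rcases eq_or_ne i (n+1) with h2 | h2
        · subst h2
          rw [if_neg (by omega), if_pos rfl, Nat.add_sub_cancel, add_zero,
            Nat.choose_self, Nat.choose_self]
        · rw [if_neg (by omega), if_neg h2]
          obtain ⟨i', rfl⟩ : ∃ i', i = i' + 1 := ⟨i - 1, by omega⟩
          rw [Nat.choose_succ_succ, Nat.add_sub_cancel]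
          push_cast; ring
    rw [this]; ring

lemma neg_one_pow_split (m i : ℕ) (h : i ≤ m) : ((-1:ℝ))^m = (-1)^(m-i) * (-1)^i := by
  rw [← pow_add]; congr 1; omega

lemma expandC (X β : ℝ) (m : ℕ) :
    poch X m = ∑ i ∈ range (m+1), (-1)^i * (m.choose i : ℝ) * poch β i * poch (X + β + i) (m - i) := by
  rw [poch_reflect X m]
  have h1 : (1 : ℝ) - X - m = β + (1 - X - m - β) := by ring
  rw [h1, vandermonde, Finset.mul_sum]
  refine Finset.sum_congr rfl fun i hi => ?_
  rw [mem_range] at hi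
  have hi' : i ≤ m := by omega
  rw [poch_reflect (1 - X - (m:ℝ) - β) (m - i)]
  have h2 : (1:ℝ) - (1 - X - (m:ℝ) - β) - ((m - i : ℕ) : ℝ) = X + β + i := by
    rw [Nat.cast_sub hi']; ring
  rw [h2, neg_one_pow_split m i hi']
  have h3 : ((-1:ℝ))^(m-i) * ((-1:ℝ))^(m-i) = 1 := by
    rw [← pow_add, Even.neg_one_pow ⟨m-i, rfl⟩]
  calc (-1:ℝ) ^ (m - i) * (-1) ^ i * (↑(m.choose i) * poch β i * ((-1) ^ (m - i) * poch (X + β + ↑i) (m - i)))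
      = ((-1:ℝ))^(m-i) * ((-1:ℝ))^(m-i) * ((-1) ^ i * ↑(m.choose i) * poch β i * poch (X + β + ↑i) (m - i)) := by ring
    _ = (-1) ^ i * ↑(m.choose i) * poch β i * poch (X + β + ↑i) (m - i) := by rw [h3, one_mul]

lemma sum_tri (N : ℕ) (f : ℕ → ℕ → ℝ) :
    ∑ k ∈ range (N+1), ∑ j ∈ range (k+1), f j (k-j)
      = ∑ j ∈ range (N+1), ∑ m ∈ range (N+1-j), f j m := by
  rw [Finset.sum_sigma', Finset.sum_sigma']
  refine Finset.sum_nbij' (fun p => ⟨p.2, p.1 - p.2⟩) (fun p => ⟨p.1 + p.2, p.1⟩) ?_ ?_ ?_ ?_ ?_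
  · rintro ⟨k, j⟩ hp
    simp only [Finset.mem_sigma, mem_range] at hp ⊢
    omega
  · rintro ⟨j, m⟩ hp
    simp only [Finset.mem_sigma, mem_range] at hp ⊢
    omega
  · rintro ⟨k, j⟩ hp
    simp only [Finset.mem_sigma, mem_range] at hp
    have h : j + (k - j) = k := by omega
    simp [h]
  · rintro ⟨j, m⟩ hp
    simp only [Finset.mem_sigma, mem_range] at hp
    have h : j + m - j = m := by omega
    simp [h]
  · rintro ⟨k, j⟩ hp
    rfl

lemma poch_congr {a b : ℝ} (n : ℕ) (h : a = b) : poch a n = poch b n := by rw [h]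

lemma neg_one_sq_pow (l : ℕ) : ((-1:ℝ))^l * ((-1:ℝ))^l = 1 := by
  rw [← pow_add, Even.neg_one_pow ⟨l, rfl⟩]

lemma saalschutz (k : ℕ) (a b c : ℝ) :
    ∑ j ∈ range (k+1), (-1)^j * (k.choose j : ℝ) * poch a j * poch b j
        * poch (c + j) (k - j) * poch (1 + a + b - c - k + j) (k - j)
      = (-1)^k * poch (c - a) k * poch (c - b) k := by
  have key : ∑ j ∈ range (k+1), (-1)^j * (k.choose j : ℝ) * poch a j * poch b j
        * poch (c + j) (k - j) * poch (1 + a + b - c - k + j) (k - j)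
      = ∑ j ∈ range (k+1), ∑ i ∈ range (k+1-j),
          ((-1:ℝ))^k * (k.choose j : ℝ) * ((k-j).choose i : ℝ) * poch a (j+i) * poch b j
            * poch (c-a) (k-j-i) * poch (c-a-b) (k-j) := by
    refine Finset.sum_congr rfl fun j hj => ?_
    rw [mem_range] at hj
    have hj' : j ≤ k := by omega
    have hc1 : ((k - j : ℕ) : ℝ) = (k:ℝ) - j := Nat.cast_sub hj'
    have r1 : poch (c + j) (k - j) = (-1)^(k-j) * poch (1 - c - (k:ℝ)) (k-j) := by
      rw [poch_reflect (c + j) (k - j)]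
      congr 1
      exact poch_congr _ (by rw [hc1]; ring)
    have r2 : poch (1 + a + b - c - k + j) (k - j) = (-1)^(k-j) * poch (c-a-b) (k-j) := by
      rw [poch_reflect (1 + a + b - c - k + j) (k - j)]
      congr 1
      exact poch_congr _ (by rw [hc1]; ring)
    have collapse : (-1:ℝ)^j * (k.choose j : ℝ) * poch a j * poch b j
        * poch (c + j) (k - j) * poch (1 + a + b - c - k + j) (k - j)
      = ((-1:ℝ))^j * (k.choose j : ℝ) * poch a j * poch b j * poch (c-a-b) (k-j)
          * poch (1 - c - (k:ℝ)) (k-j) := by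
      rw [r1, r2]
      calc (-1:ℝ)^j * (k.choose j : ℝ) * poch a j * poch b j
            * ((-1)^(k-j) * poch (1 - c - (k:ℝ)) (k-j)) * ((-1)^(k-j) * poch (c-a-b) (k-j))
          = ((-1:ℝ))^(k-j) * ((-1:ℝ))^(k-j) * ((-1:ℝ)^j * (k.choose j : ℝ) * poch a j * poch b j
              * poch (c-a-b) (k-j) * poch (1 - c - (k:ℝ)) (k-j)) := by ring
        _ = _ := by rw [neg_one_sq_pow, one_mul]
    rw [collapse, expandC (1 - c - (k:ℝ)) (a + (j:ℝ)) (k - j), Finset.mul_sum]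
    rw [show k - j + 1 = k + 1 - j from by omega]
    refine Finset.sum_congr rfl fun i hi => ?_
    rw [mem_range] at hi
    have hi' : i ≤ k - j := by omega
    have hc2 : ((k - j - i : ℕ) : ℝ) = (k:ℝ) - j - i := by
      rw [Nat.cast_sub (by omega : i ≤ k - j), hc1]
    have e2 : poch (1 - c - (k:ℝ) + (a + (j:ℝ)) + (i:ℝ)) (k-j-i)
        = (-1)^(k-j-i) * poch (c-a) (k-j-i) := by
      rw [poch_reflect (1 - c - (k:ℝ) + (a + (j:ℝ)) + (i:ℝ)) (k-j-i)]
      congr 1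
      exact poch_congr _ (by rw [hc2]; ring)
    have e3 : poch a (j+i) = poch a j * poch (a + (j:ℝ)) i := poch_add a j i
    have sgn : ((-1:ℝ))^k = (-1:ℝ)^j * (-1:ℝ)^i * (-1:ℝ)^(k-j-i) := by
      rw [← pow_add, ← pow_add]; congr 1; omega
    rw [e2, e3, sgn]; ring
  rw [key, ← sum_tri k (fun j i => ((-1:ℝ))^k * (k.choose j : ℝ) * ((k-j).choose i : ℝ)
      * poch a (j+i) * poch b j * poch (c-a) (k-j-i) * poch (c-a-b) (k-j))]
  have key2 : ∀ s ∈ range (k+1), ∑ j ∈ range (s+1),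
        ((-1:ℝ))^k * (k.choose j : ℝ) * ((k-j).choose (s-j) : ℝ) * poch a (j+(s-j)) * poch b j
          * poch (c-a) (k-j-(s-j)) * poch (c-a-b) (k-j)
      = ((-1:ℝ))^k * (k.choose s : ℝ) * poch a s * poch (c-a) (k-s) * poch (c-a-b) (k-s)
          * poch (c - a + ((k-s:ℕ):ℝ)) s := by
    intro s hs
    rw [mem_range] at hs
    have hs' : s ≤ k := by omega
    have inner : ∀ j ∈ range (s+1),
        ((-1:ℝ))^k * (k.choose j : ℝ) * ((k-j).choose (s-j) : ℝ) * poch a (j+(s-j)) * poch b j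
          * poch (c-a) (k-j-(s-j)) * poch (c-a-b) (k-j)
        = (((-1:ℝ))^k * (k.choose s : ℝ) * poch a s * poch (c-a) (k-s) * poch (c-a-b) (k-s))
          * ((s.choose j : ℝ) * poch b j * poch (c-a-b + ((k-s:ℕ):ℝ)) (s-j)) := by
      intro j hjm
      rw [mem_range] at hjm
      have hj' : j ≤ s := by omega
      have h1 : j + (s - j) = s := by omega
      have h2 : k - j - (s - j) = k - s := by omega
      have h3 : (k.choose j : ℝ) * ((k-j).choose (s-j) : ℝ) = (k.choose s : ℝ) * (s.choose j : ℝ) := by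
        rw [← Nat.cast_mul, ← Nat.cast_mul, ← Nat.choose_mul hj']
      have h4 : poch (c-a-b) (k-j) = poch (c-a-b) (k-s) * poch (c-a-b + ((k-s:ℕ):ℝ)) (s-j) := by
        rw [show k - j = (k-s) + (s-j) from by omega, poch_add]
      rw [h1, h2, h4]
      calc ((-1:ℝ))^k * (k.choose j : ℝ) * ((k-j).choose (s-j) : ℝ) * poch a s * poch b j
            * poch (c-a) (k-s) * (poch (c-a-b) (k-s) * poch (c-a-b + ((k-s:ℕ):ℝ)) (s-j))
          = ((k.choose j : ℝ) * ((k-j).choose (s-j) : ℝ)) * (((-1:ℝ))^k * poch a s * poch b j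
            * poch (c-a) (k-s) * poch (c-a-b) (k-s) * poch (c-a-b + ((k-s:ℕ):ℝ)) (s-j)) := by ring
        _ = _ := by rw [h3]; ring
    rw [Finset.sum_congr rfl inner, ← Finset.mul_sum]
    have vdm : ∑ j ∈ range (s+1), (s.choose j : ℝ) * poch b j * poch (c-a-b + ((k-s:ℕ):ℝ)) (s-j)
        = poch (b + (c-a-b + ((k-s:ℕ):ℝ))) s := (vandermonde b (c-a-b + ((k-s:ℕ):ℝ)) s).symm
    rw [vdm, poch_congr s (show b + (c-a-b + ((k-s:ℕ):ℝ)) = c - a + ((k-s:ℕ):ℝ) by ring)]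
  rw [Finset.sum_congr rfl key2]
  have final : ∀ s ∈ range (k+1),
      ((-1:ℝ))^k * (k.choose s : ℝ) * poch a s * poch (c-a) (k-s) * poch (c-a-b) (k-s)
        * poch (c - a + ((k-s:ℕ):ℝ)) s
      = (((-1:ℝ))^k * poch (c-a) k) * ((k.choose s : ℝ) * poch a s * poch (c-a-b) (k-s)) := by
    intro s hs
    rw [mem_range] at hs
    have h5 : poch (c-a) (k-s) * poch (c - a + ((k-s:ℕ):ℝ)) s = poch (c-a) k := by
      rw [← poch_add, show k - s + s = k from by omega]
    calc ((-1:ℝ))^k * (k.choose s : ℝ) * poch a s * poch (c-a) (k-s) * poch (c-a-b) (k-s)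
          * poch (c - a + ((k-s:ℕ):ℝ)) s
        = ((-1:ℝ))^k * (k.choose s : ℝ) * poch a s * poch (c-a-b) (k-s)
          * (poch (c-a) (k-s) * poch (c - a + ((k-s:ℕ):ℝ)) s) := by ring
      _ = _ := by rw [h5]; ring
  rw [Finset.sum_congr rfl final, ← Finset.mul_sum, ← vandermonde a (c-a-b) k,
    poch_congr k (show a + (c-a-b) = c - b by ring)]

noncomputable def MM (n : ℕ) (a₁ a₂ a₃ b₁ b₂ b₃ : ℝ) : ℝ :=
  ∑ k ∈ range (n+1), (-1)^k * (n.choose k : ℝ) * poch a₁ k * poch a₂ k * poch a₃ k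
    * poch (b₁ + k) (n-k) * poch (b₂ + k) (n-k) * poch (b₃ + k) (n-k)

lemma whipple1 (n : ℕ) (x y z u v w : ℝ) (hs : u + v + w = 1 - (n:ℝ) + x + y + z) :
    MM n x y z u v w = MM n x (u-y) (u-z) u (1-v+x-n) (1-w+x-n) := by
  have expand : ∀ k ∈ range (n+1),
      (-1:ℝ)^k * (n.choose k : ℝ) * poch x k * poch y k * poch z k
          * poch (u + k) (n-k) * poch (v + k) (n-k) * poch (w + k) (n-k)
      = ∑ j ∈ range (k+1),
          (fun (j m : ℕ) => ((-1:ℝ))^j * (n.choose j : ℝ) * poch x j * poch (u-y) j * poch (u-z) j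
            * poch (u + j) (n-j)
            * ((-1:ℝ)^m * ((n-j).choose m : ℝ) * poch (x + (j:ℝ)) m * poch (y+z-u) m
                * poch (v + j + m) (n-j-m) * poch (w + j + m) (n-j-m))) j (k-j) := by
    intro k hk
    rw [mem_range] at hk
    have hk' : k ≤ n := by omega
    have sal : poch y k * poch z k
        = (-1:ℝ)^k * ∑ j ∈ range (k+1), (-1)^j * (k.choose j : ℝ) * poch (u-y) j * poch (u-z) j
            * poch (u + j) (k - j) * poch (1 + (u-y) + (u-z) - u - k + j) (k - j) := by
      rw [saalschutz k (u-y) (u-z) u]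
      rw [poch_congr k (show u - (u-y) = y by ring), poch_congr k (show u - (u-z) = z by ring)]
      calc poch y k * poch z k
          = ((-1:ℝ)^k * (-1:ℝ)^k) * (poch y k * poch z k) := by rw [neg_one_sq_pow, one_mul]
        _ = (-1:ℝ)^k * ((-1:ℝ)^k * poch y k * poch z k) := by ring
    calc (-1:ℝ)^k * (n.choose k : ℝ) * poch x k * poch y k * poch z k
          * poch (u + k) (n-k) * poch (v + k) (n-k) * poch (w + k) (n-k)
        = ((-1:ℝ)^k * (n.choose k : ℝ) * poch x k * poch (u + k) (n-k) * poch (v + k) (n-k)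
            * poch (w + k) (n-k)) * (poch y k * poch z k) := by ring
      _ = ((-1:ℝ)^k * (n.choose k : ℝ) * poch x k * poch (u + k) (n-k) * poch (v + k) (n-k)
            * poch (w + k) (n-k)) * ((-1:ℝ)^k
            * ∑ j ∈ range (k+1), (-1)^j * (k.choose j : ℝ) * poch (u-y) j * poch (u-z) j
              * poch (u + j) (k - j) * poch (1 + (u-y) + (u-z) - u - k + j) (k - j)) := by rw [sal]
      _ = ∑ j ∈ range (k+1), ((-1:ℝ)^k * (n.choose k : ℝ) * poch x k * poch (u + k) (n-k)
            * poch (v + k) (n-k) * poch (w + k) (n-k)) * ((-1:ℝ)^k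
            * ((-1)^j * (k.choose j : ℝ) * poch (u-y) j * poch (u-z) j
              * poch (u + j) (k - j) * poch (1 + (u-y) + (u-z) - u - k + j) (k - j))) := by
          rw [Finset.mul_sum, Finset.mul_sum]
      _ = _ := by
          refine Finset.sum_congr rfl fun j hj => ?_
          rw [mem_range] at hj
          have hj' : j ≤ k := by omega
          have hcast : ((k - j : ℕ) : ℝ) = (k:ℝ) - j := Nat.cast_sub hj'
          have hcol : poch (u + (j:ℝ)) (n-j) = poch (u + j) (k-j) * poch (u + (k:ℝ)) (n-k) := by
            rw [show n - j = (k-j) + (n-k) from by omega, poch_add]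
            congr 1
            exact poch_congr _ (by rw [hcast]; ring)
          have hd2 : poch (1 + (u-y) + (u-z) - u - (k:ℝ) + j) (k-j)
              = (-1)^(k-j) * poch (y+z-u) (k-j) := by
            rw [poch_reflect (1 + (u-y) + (u-z) - u - (k:ℝ) + j) (k-j)]
            congr 1
            exact poch_congr _ (by rw [hcast]; ring)
          have hch : (n.choose k : ℝ) * (k.choose j : ℝ)
              = (n.choose j : ℝ) * ((n-j).choose (k-j) : ℝ) := by
            rw [← Nat.cast_mul, ← Nat.cast_mul, Nat.choose_mul hj']
          have hx : poch x k = poch x j * poch (x + (j:ℝ)) (k-j) := by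
            rw [← poch_add, show j + (k-j) = k from by omega]
          have hv : poch (v + (k:ℝ)) (n-k) = poch (v + (j:ℝ) + ((k-j:ℕ):ℝ)) (n-j-(k-j)) := by
            rw [show n - j - (k-j) = n - k from by omega]
            exact poch_congr _ (by rw [hcast]; ring)
          have hw : poch (w + (k:ℝ)) (n-k) = poch (w + (j:ℝ) + ((k-j:ℕ):ℝ)) (n-j-(k-j)) := by
            rw [show n - j - (k-j) = n - k from by omega]
            exact poch_congr _ (by rw [hcast]; ring)
          simp only
          rw [hd2, hx, hv, hw]
          calc ((-1:ℝ)^k * (n.choose k : ℝ) * (poch x j * poch (x + (j:ℝ)) (k-j))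
                * poch (u + k) (n-k) * poch (v + (j:ℝ) + ((k-j:ℕ):ℝ)) (n-j-(k-j))
                * poch (w + (j:ℝ) + ((k-j:ℕ):ℝ)) (n-j-(k-j))) * ((-1:ℝ)^k
                * ((-1)^j * (k.choose j : ℝ) * poch (u-y) j * poch (u-z) j
                  * poch (u + j) (k - j) * ((-1)^(k-j) * poch (y+z-u) (k-j))))
              = ((-1:ℝ)^k * (-1:ℝ)^k) * ((n.choose k : ℝ) * (k.choose j : ℝ))
                * ((-1:ℝ)^j * poch x j * poch (u-y) j * poch (u-z) j
                  * (poch (u + j) (k-j) * poch (u + (k:ℝ)) (n-k))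
                  * ((-1:ℝ)^(k-j) * poch (x + (j:ℝ)) (k-j) * poch (y+z-u) (k-j)
                    * poch (v + (j:ℝ) + ((k-j:ℕ):ℝ)) (n-j-(k-j))
                    * poch (w + (j:ℝ) + ((k-j:ℕ):ℝ)) (n-j-(k-j)))) := by ring
            _ = _ := by
                rw [neg_one_sq_pow, one_mul, hch, ← hcol]
                ring
  rw [MM, Finset.sum_congr rfl expand,
    sum_tri n (fun (j m : ℕ) => ((-1:ℝ))^j * (n.choose j : ℝ) * poch x j * poch (u-y) j * poch (u-z) j
            * poch (u + j) (n-j)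
            * ((-1:ℝ)^m * ((n-j).choose m : ℝ) * poch (x + (j:ℝ)) m * poch (y+z-u) m
                * poch (v + j + m) (n-j-m) * poch (w + j + m) (n-j-m)))]
  have inner : ∀ j ∈ range (n+1),
      ∑ m ∈ range (n+1-j),
        (((-1:ℝ))^j * (n.choose j : ℝ) * poch x j * poch (u-y) j * poch (u-z) j
          * poch (u + j) (n-j)
          * ((-1:ℝ)^m * ((n-j).choose m : ℝ) * poch (x + (j:ℝ)) m * poch (y+z-u) m
              * poch (v + j + m) (n-j-m) * poch (w + j + m) (n-j-m)))
      = ((-1:ℝ))^j * (n.choose j : ℝ) * poch x j * poch (u-y) j * poch (u-z) j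
          * poch (u + j) (n-j)
          * ((-1:ℝ)^(n-j) * poch (v - x) (n-j) * poch (u + v - y - z + (j:ℝ)) (n-j)) := by
    intro j hj
    rw [mem_range] at hj
    have hj' : j ≤ n := by omega
    have hcast : ((n - j : ℕ) : ℝ) = (n:ℝ) - j := Nat.cast_sub hj'
    have hform : ∀ m ∈ range (n-j+1),
        ((-1:ℝ)^m * ((n-j).choose m : ℝ) * poch (x + (j:ℝ)) m * poch (y+z-u) m
              * poch (v + j + m) (n-j-m) * poch (w + j + m) (n-j-m))
        = (-1:ℝ)^m * ((n-j).choose m : ℝ) * poch (x + (j:ℝ)) m * poch (y+z-u) m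
              * poch ((v + (j:ℝ)) + m) ((n-j)-m)
              * poch (1 + (x + (j:ℝ)) + (y+z-u) - (v + (j:ℝ)) - ((n-j:ℕ):ℝ) + m) ((n-j)-m) := by
      intro m _
      have : poch (w + (j:ℝ) + (m:ℝ)) (n-j-m)
          = poch (1 + (x + (j:ℝ)) + (y+z-u) - (v + (j:ℝ)) - ((n-j:ℕ):ℝ) + m) ((n-j)-m) :=
        poch_congr _ (by rw [hcast]; linarith [hs])
      rw [this]
    rw [show n + 1 - j = (n-j) + 1 from by omega, ← Finset.mul_sum,
      Finset.sum_congr rfl hform, saalschutz (n-j) (x + (j:ℝ)) (y+z-u) (v + (j:ℝ))]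
    rw [poch_congr (n-j) (show v + (j:ℝ) - (x + (j:ℝ)) = v - x by ring),
      poch_congr (n-j) (show v + (j:ℝ) - (y+z-u) = u + v - y - z + (j:ℝ) by ring)]
  rw [Finset.sum_congr rfl inner, MM]
  refine Finset.sum_congr rfl fun j hj => ?_
  rw [mem_range] at hj
  have hj' : j ≤ n := by omega
  have hcast : ((n - j : ℕ) : ℝ) = (n:ℝ) - j := Nat.cast_sub hj'
  have hrefl : poch ((1-v+x-(n:ℝ)) + (j:ℝ)) (n-j) = (-1:ℝ)^(n-j) * poch (v-x) (n-j) := by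
    rw [poch_reflect ((1-v+x-(n:ℝ)) + (j:ℝ)) (n-j)]
    congr 1
    exact poch_congr _ (by rw [hcast]; ring)
  have hw2 : poch ((1-w+x-(n:ℝ)) + (j:ℝ)) (n-j) = poch (u + v - y - z + (j:ℝ)) (n-j) :=
    poch_congr _ (by linarith [hs])
  rw [hrefl, hw2]
  ring

lemma MM_flip (n : ℕ) (a₁ a₂ a₃ b₁ b₂ b₃ : ℝ) :
    MM n a₁ a₂ a₃ b₁ b₂ b₃
      = MM n (1-b₁-n) (1-b₂-n) (1-b₃-n) (1-a₁-n) (1-a₂-n) (1-a₃-n) := by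
  rw [MM, MM, ← Finset.sum_range_reflect]
  refine Finset.sum_congr rfl fun k hk => ?_
  rw [mem_range] at hk
  have hk' : k ≤ n := by omega
  have h1 : n + 1 - 1 - k = n - k := by omega
  rw [h1]
  have h2 : n - (n - k) = k := by omega
  rw [h2, Nat.choose_symm hk']
  have hcast : ((n - k : ℕ) : ℝ) = (n:ℝ) - k := Nat.cast_sub hk'
  have htop : ∀ a : ℝ, poch a (n-k) = (-1:ℝ)^(n-k) * poch ((1-a-(n:ℝ)) + k) (n-k) := by
    intro a
    rw [poch_reflect a (n-k)]
    congr 1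
    exact poch_congr _ (by rw [hcast]; ring)
  have hbot : ∀ b : ℝ, poch (b + ((n-k:ℕ):ℝ)) k = (-1:ℝ)^k * poch (1-b-(n:ℝ)) k := by
    intro b
    rw [poch_reflect (b + ((n-k:ℕ):ℝ)) k]
    congr 1
    exact poch_congr _ (by rw [hcast]; ring)
  rw [htop a₁, htop a₂, htop a₃, hbot b₁, hbot b₂, hbot b₃]
  have hsgn : ((-1:ℝ))^(n-k) * ((-1:ℝ)^(n-k) * (-1:ℝ)^(n-k) * (-1:ℝ)^(n-k))
      * ((-1:ℝ)^k * (-1:ℝ)^k * (-1:ℝ)^k) = (-1:ℝ)^k := by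
    calc ((-1:ℝ))^(n-k) * ((-1:ℝ)^(n-k) * (-1:ℝ)^(n-k) * (-1:ℝ)^(n-k))
        * ((-1:ℝ)^k * (-1:ℝ)^k * (-1:ℝ)^k)
        = (((-1:ℝ))^(n-k) * ((-1:ℝ))^(n-k)) * (((-1:ℝ))^(n-k) * ((-1:ℝ))^(n-k))
          * (((-1:ℝ))^k * ((-1:ℝ))^k) * ((-1:ℝ))^k := by ring
      _ = (-1:ℝ)^k := by simp only [neg_one_sq_pow]; ring
  calc (-1:ℝ)^(n-k) * (n.choose k : ℝ)
        * ((-1:ℝ)^(n-k) * poch ((1-a₁-(n:ℝ)) + k) (n-k))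
        * ((-1:ℝ)^(n-k) * poch ((1-a₂-(n:ℝ)) + k) (n-k))
        * ((-1:ℝ)^(n-k) * poch ((1-a₃-(n:ℝ)) + k) (n-k))
        * ((-1:ℝ)^k * poch (1-b₁-(n:ℝ)) k)
        * ((-1:ℝ)^k * poch (1-b₂-(n:ℝ)) k)
        * ((-1:ℝ)^k * poch (1-b₃-(n:ℝ)) k)
      = (((-1:ℝ))^(n-k) * ((-1:ℝ)^(n-k) * (-1:ℝ)^(n-k) * (-1:ℝ)^(n-k))
          * ((-1:ℝ)^k * (-1:ℝ)^k * (-1:ℝ)^k))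
        * ((n.choose k : ℝ) * poch (1-b₁-(n:ℝ)) k * poch (1-b₂-(n:ℝ)) k * poch (1-b₃-(n:ℝ)) k
          * poch ((1-a₁-(n:ℝ)) + k) (n-k) * poch ((1-a₂-(n:ℝ)) + k) (n-k)
          * poch ((1-a₃-(n:ℝ)) + k) (n-k)) := by ring
    _ = _ := by rw [hsgn]; ring

lemma poch_neg_nat (n k : ℕ) (h : k ≤ n) :
    poch (-(n:ℝ)) k = (-1:ℝ)^k * (n.choose k : ℝ) * (k.factorial : ℝ) := by
  induction k with
  | zero => simp [poch]
  | succ k ih =>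
    have hk : k ≤ n := by omega
    rw [poch_succ, ih hk]
    have hc : (n.choose (k+1) : ℝ) * ((k:ℝ)+1) = (n.choose k : ℝ) * ((n:ℝ) - k) := by
      have := Nat.choose_succ_right_eq n k
      have hcast : ((n - k : ℕ) : ℝ) = (n:ℝ) - k := Nat.cast_sub hk
      calc (n.choose (k+1) : ℝ) * ((k:ℝ)+1) = ((n.choose (k+1) * (k+1) : ℕ) : ℝ) := by push_cast; ring
        _ = ((n.choose k * (n - k) : ℕ) : ℝ) := by rw [this]
        _ = (n.choose k : ℝ) * ((n:ℝ) - k) := by rw [Nat.cast_mul, hcast]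
    rw [Nat.factorial_succ]
    push_cast
    calc (-1:ℝ)^k * (n.choose k : ℝ) * (k.factorial : ℝ) * (-(n:ℝ) + k)
        = -((-1:ℝ)^k * (k.factorial : ℝ)) * ((n.choose k : ℝ) * ((n:ℝ) - k)) := by ring
      _ = -((-1:ℝ)^k * (k.factorial : ℝ)) * ((n.choose (k+1) : ℝ) * ((k:ℝ)+1)) := by rw [hc]
      _ = (-1:ℝ)^(k+1) * (n.choose (k+1) : ℝ) * (((k:ℝ)+1) * (k.factorial : ℝ)) := by
          rw [pow_succ]; ring

lemma F43_MM (n : ℕ) (a b c d e f : ℝ)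
    (hd : ∀ k ≤ n, poch d k ≠ 0) (he : ∀ k ≤ n, poch e k ≠ 0) (hf : ∀ k ≤ n, poch f k ≠ 0) :
    poch d n * poch e n * poch f n * F43 n a b c d e f = MM n a b c d e f := by
  rw [F43, MM, Finset.mul_sum]
  refine Finset.sum_congr rfl fun k hk => ?_
  rw [mem_range] at hk
  have hk' : k ≤ n := by omega
  have hsplit : ∀ t : ℝ, poch t n = poch t k * poch (t + k) (n-k) := by
    intro t
    rw [← poch_add, show k + (n-k) = n from by omega]
  rw [hsplit d, hsplit e, hsplit f, poch_neg_nat n k hk']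
  have hfac : (k.factorial : ℝ) ≠ 0 := Nat.cast_ne_zero.mpr k.factorial_ne_zero
  field_simp [hd k hk', he k hk', hf k hk']

lemma MM_swap_b12 (n : ℕ) (a₁ a₂ a₃ b₁ b₂ b₃ : ℝ) :
    MM n a₁ a₂ a₃ b₁ b₂ b₃ = MM n a₁ a₂ a₃ b₂ b₁ b₃ :=
  Finset.sum_congr rfl fun k _ => by ring

lemma MM_swap_a13 (n : ℕ) (a₁ a₂ a₃ b₁ b₂ b₃ : ℝ) :
    MM n a₁ a₂ a₃ b₁ b₂ b₃ = MM n a₃ a₂ a₁ b₁ b₂ b₃ :=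
  Finset.sum_congr rfl fun k _ => by ring

lemma MM_congr (n : ℕ) {a₁ a₂ a₃ b₁ b₂ b₃ a₁' a₂' a₃' b₁' b₂' b₃' : ℝ}
    (h₁ : a₁ = a₁') (h₂ : a₂ = a₂') (h₃ : a₃ = a₃')
    (h₄ : b₁ = b₁') (h₅ : b₂ = b₂') (h₆ : b₃ = b₃') :
    MM n a₁ a₂ a₃ b₁ b₂ b₃ = MM n a₁' a₂' a₃' b₁' b₂' b₃' := by
  rw [h₁, h₂, h₃, h₄, h₅, h₆]

/-- Double application of Whipple's transformation for a
terminating Saalschützian `₄F₃`. -/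
theorem whipple_transformation_iterated
    (n : ℕ) (x y z u v w : ℝ)
    (hsa : u + v + w = -(n : ℝ) + x + y + z + 1)
    (hden : ∀ k ≤ n, poch u k ≠ 0 ∧ poch v k ≠ 0 ∧ poch w k ≠ 0
      ∧ poch (1 - x - (n : ℝ)) k ≠ 0 ∧ poch (1 - v + y - (n : ℝ)) k ≠ 0
      ∧ poch (1 - v + z - (n : ℝ)) k ≠ 0) :
    poch u n * poch v n * poch w n * F43 n x y z u v w
      = poch (1 - x - (n : ℝ)) n * poch (1 - v + y - (n : ℝ)) n
          * poch (1 - v + z - (n : ℝ)) n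
        * F43 n (w - x) (u - x) (1 - v - (n : ℝ))
            (1 - x - (n : ℝ)) (1 - v + y - (n : ℝ)) (1 - v + z - (n : ℝ)) := by
  have hsa' : v + u + w = 1 - (n:ℝ) + x + y + z := by linarith
  have h1 : poch u n * poch v n * poch w n * F43 n x y z u v w = MM n x y z u v w :=
    F43_MM n x y z u v w (fun k hk => (hden k hk).1) (fun k hk => (hden k hk).2.1)
      (fun k hk => (hden k hk).2.2.1)
  have h2 : poch (1 - x - (n : ℝ)) n * poch (1 - v + y - (n : ℝ)) n
        * poch (1 - v + z - (n : ℝ)) n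
        * F43 n (w - x) (u - x) (1 - v - (n : ℝ))
            (1 - x - (n : ℝ)) (1 - v + y - (n : ℝ)) (1 - v + z - (n : ℝ))
      = MM n (w - x) (u - x) (1 - v - (n:ℝ)) (1 - x - (n:ℝ)) (1 - v + y - (n:ℝ))
          (1 - v + z - (n:ℝ)) :=
    F43_MM n (w - x) (u - x) (1 - v - (n:ℝ)) (1 - x - (n:ℝ)) (1 - v + y - (n:ℝ))
      (1 - v + z - (n:ℝ)) (fun k hk => (hden k hk).2.2.2.1)
      (fun k hk => (hden k hk).2.2.2.2.1) (fun k hk => (hden k hk).2.2.2.2.2)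
  rw [h1, h2]
  calc MM n x y z u v w
      = MM n x y z v u w := MM_swap_b12 n x y z u v w
    _ = MM n x (v-y) (v-z) v (1-u+x-n) (1-w+x-n) := whipple1 n x y z v u w hsa'
    _ = MM n (1-v-(n:ℝ)) (1-(1-u+x-(n:ℝ))-(n:ℝ)) (1-(1-w+x-(n:ℝ))-(n:ℝ))
          (1-x-(n:ℝ)) (1-(v-y)-(n:ℝ)) (1-(v-z)-(n:ℝ)) :=
        MM_flip n x (v-y) (v-z) v (1-u+x-(n:ℝ)) (1-w+x-(n:ℝ))
    _ = MM n (1-v-(n:ℝ)) (u-x) (w-x) (1-x-(n:ℝ)) (1-v+y-(n:ℝ)) (1-v+z-(n:ℝ)) :=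
        MM_congr n rfl (by ring) (by ring) rfl (by ring) (by ring)
    _ = MM n (w-x) (u-x) (1-v-(n:ℝ)) (1-x-(n:ℝ)) (1-v+y-(n:ℝ)) (1-v+z-(n:ℝ)) :=
        MM_swap_a13 n (1-v-(n:ℝ)) (u-x) (w-x) (1-x-(n:ℝ)) (1-v+y-(n:ℝ)) (1-v+z-(n:ℝ))
end

section
/- The map on parameters (𝔭₁,…,𝔭_p) ↦ (𝔭̃₁,…,𝔭̃_p) defined by 𝔭_k = 𝔭̃_{p+1-k}(1-|𝔭̃|)/((1-P̃₁^{p+1-k})(1-P̃₁^{p-k})) for k = 1,…,p (where P̃₁^j = 𝔭̃₁+⋯+𝔭̃_j, P̃₁^0 = 0, |𝔭̃| = P̃₁^p) is an involution on the set of parameter vectors for which all denominators are nonzero: applying the same formula to 𝔭̃ recovers 𝔭. -/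
/-- Partial sum `Q 0 + ⋯ + Q (m-1)`. -/
def krawS (p : ℕ) (Q : Fin p → ℝ) (m : ℕ) : ℝ :=
  ∑ j : Fin p, if (j : ℕ) < m then Q j else 0

lemma krawS_zero (p : ℕ) (Q : Fin p → ℝ) : krawS p Q 0 = 0 := by
  simp [krawS]

lemma krawS_succ (p : ℕ) (Q : Fin p → ℝ) (m : ℕ) (hm : m < p) :
    krawS p Q (m + 1) = krawS p Q m + Q ⟨m, hm⟩ := by
  have key : (∑ j : Fin p, ((if (j : ℕ) < m + 1 then Q j else 0)
      - (if (j : ℕ) < m then Q j else 0))) = Q ⟨m, hm⟩ := by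
    rw [Finset.sum_eq_single (⟨m, hm⟩ : Fin p)]
    · simp
    · intro b _ hb
      have hbm : (b : ℕ) ≠ m := fun hh => hb (Fin.ext hh)
      split_ifs with h1 h2 <;> simp_all <;> omega
    · simp
  rw [Finset.sum_sub_distrib] at key
  unfold krawS
  linarith

lemma krawS_top (p : ℕ) (Q : Fin p → ℝ) :
    krawS p Q p = ∑ j, Q j := by
  unfold krawS
  apply Finset.sum_congr rfl
  intro j _; simp [j.isLt]

/-- The parameter transformation
`𝔭_k = 𝔭̃_{p+1-k}(1-|𝔭̃|)/((1-P̃₁^{p+1-k})(1-P̃₁^{p-k}))` (`k = 1,…,p`) is an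
involution: applying the same formula to `𝔭̃` recovers `𝔭`.
(Lean index `k : Fin p` corresponds to subscript `k+1`; `Fin.rev k` has value
`p-1-k`, i.e. subscript `p-k`.) -/
theorem krawtchouk_parameter_involution
    (p : ℕ) (P Q : Fin p → ℝ)
    (hQden : ∀ m : ℕ, m ≤ p → 1 - (∑ j : Fin p, if (j : ℕ) < m then Q j else 0) ≠ 0)
    (hPden : ∀ m : ℕ, m ≤ p → 1 - (∑ j : Fin p, if (j : ℕ) < m then P j else 0) ≠ 0)
    (h : ∀ k : Fin p, P k =
      Q (Fin.rev k) * (1 - ∑ j : Fin p, Q j)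
        / ((1 - ∑ j : Fin p, if (j : ℕ) < p - (k : ℕ) then Q j else 0)
            * (1 - ∑ j : Fin p, if (j : ℕ) < p - (k : ℕ) - 1 then Q j else 0))) :
    ∀ k : Fin p, Q k =
      P (Fin.rev k) * (1 - ∑ j : Fin p, P j)
        / ((1 - ∑ j : Fin p, if (j : ℕ) < p - (k : ℕ) then P j else 0)
            * (1 - ∑ j : Fin p, if (j : ℕ) < p - (k : ℕ) - 1 then P j else 0)) := by
  have hQden' : ∀ m : ℕ, m ≤ p → 1 - krawS p Q m ≠ 0 := hQden
  have hPden' : ∀ m : ℕ, m ≤ p → 1 - krawS p P m ≠ 0 := hPden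
  have h' : ∀ k : Fin p, P k =
      Q (Fin.rev k) * (1 - krawS p Q p)
        / ((1 - krawS p Q (p - (k : ℕ))) * (1 - krawS p Q (p - (k : ℕ) - 1))) := by
    intro k
    rw [krawS_top]; exact h k
  -- key identity: (1 - SP m) * (1 - SQ (p - m)) = 1 - SQ p
  have key : ∀ m : ℕ, m ≤ p →
      (1 - krawS p P m) * (1 - krawS p Q (p - m)) = 1 - krawS p Q p := by
    intro m
    induction m with
    | zero => intro _; simp [krawS_zero]
    | succ m ih =>
      intro hm1
      have hmp : m < p := hm1
      have ihm := ih (le_of_lt hmp)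
      have hstep : krawS p P (m + 1) = krawS p P m + P ⟨m, hmp⟩ := krawS_succ p P m hmp
      have hrev : (Fin.rev (⟨m, hmp⟩ : Fin p)) = ⟨p - m - 1, by omega⟩ := by
        ext; simp [Fin.val_rev]; omega
      have hQstep : krawS p Q (p - m) = krawS p Q (p - m - 1) + Q ⟨p - m - 1, by omega⟩ := by
        have := krawS_succ p Q (p - m - 1) (by omega)
        rwa [show p - m - 1 + 1 = p - m by omega] at this
      have hP : P ⟨m, hmp⟩ =
          Q ⟨p - m - 1, by omega⟩ * (1 - krawS p Q p)
            / ((1 - krawS p Q (p - m)) * (1 - krawS p Q (p - m - 1))) := by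
        have := h' ⟨m, hmp⟩
        rwa [hrev] at this
      have d1 : 1 - krawS p Q (p - m) ≠ 0 := hQden' _ (by omega)
      have d2 : 1 - krawS p Q (p - m - 1) ≠ 0 := hQden' _ (by omega)
      rw [hstep, hP]
      simp only [show p - (m + 1) = p - m - 1 from by omega]
      field_simp
      linear_combination (1 - krawS p Q (p - m - 1)) * ihm
        + (1 - krawS p Q p) * hQstep
  intro k
  have hk := k.isLt
  have hPk : P (Fin.rev k) =
      Q k * (1 - krawS p Q p)
        / ((1 - krawS p Q ((k : ℕ) + 1)) * (1 - krawS p Q (k : ℕ))) := by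
    have hh := h' (Fin.rev k)
    have hv : ((Fin.rev k : Fin p) : ℕ) = p - ((k : ℕ) + 1) := Fin.val_rev k
    rw [Fin.rev_rev, hv, show p - (p - ((k : ℕ) + 1)) = (k : ℕ) + 1 from by omega,
      show (k : ℕ) + 1 - 1 = (k : ℕ) from by omega] at hh
    exact hh
  have key1 := key (p - (k : ℕ)) (by omega)
  have key2 := key (p - (k : ℕ) - 1) (by omega)
  rw [show p - (p - (k : ℕ)) = (k : ℕ) from by omega] at key1
  rw [show p - (p - (k : ℕ) - 1) = (k : ℕ) + 1 from by omega] at key2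
  have keyp := key p le_rfl
  rw [Nat.sub_self, krawS_zero] at keyp
  have dk : 1 - krawS p Q (k : ℕ) ≠ 0 := hQden' _ (by omega)
  have dk1 : 1 - krawS p Q ((k : ℕ) + 1) ≠ 0 := hQden' _ (by omega)
  have dp : 1 - krawS p Q p ≠ 0 := hQden' _ le_rfl
  have dA : 1 - krawS p P (p - (k : ℕ)) ≠ 0 := hPden' _ (by omega)
  have dB : 1 - krawS p P (p - (k : ℕ) - 1) ≠ 0 := hPden' _ (by omega)
  show Q k = P (Fin.rev k) * (1 - ∑ j : Fin p, P j)
      / ((1 - krawS p P (p - (k : ℕ))) * (1 - krawS p P (p - (k : ℕ) - 1)))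
  rw [← krawS_top p P, hPk,
    show (1 : ℝ) - krawS p P p = 1 - krawS p Q p from by linarith [keyp]]
  field_simp
  linear_combination Q k * (1 - krawS p Q ((k : ℕ) + 1)) * (1 - krawS p P (p - (k : ℕ) - 1)) * key1
    + Q k * (1 - krawS p Q p) * key2
end

section
/- The one-dimensional Racah difference operator is self-adjoint: let N ∈ ℕ, β₀,β₁,β₂ real parameters, ρ(x) = [Γ(β₁-β₀+x)Γ(β₁+x)/(x! Γ(β₀+1+x))]·[Γ(β₂-β₁+N-x)Γ(β₂+N+x)/((N-x)! Γ(β₁+1+N+x))]·(β₁+2x), A₊(x) = (x+β₁-β₀)(x+β₁)(x+β₂+N)(N-x)/((2x+β₁)(2x+β₁+1)), A₋(x) = x(x+β₀)(N-x+β₂-β₁)(N+x+β₁)/((2x+β₁)(2x+β₁-1)), and L f(x) = A₊(x)(f(x+1)-f(x)) - A₋(x)(f(x)-f(x-1)). Then for all functions f, g on {0,1,…,N}, ∑_{x=0}^{N} (Lf)(x) g(x) ρ(x) = ∑_{x=0}^{N} f(x) (Lg)(x) ρ(x), provided the parameters are such that ρ and the coefficients are well defined (in particular A₊(N) = 0 and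 A₋(0) = 0). -/
set_option maxHeartbeats 1000000 in
private lemma racah_alg_aux (b0 b1 b2 xr Nr G1 G2 G3 G4 G5 G6 F1 F2 : ℝ)
    (nG3 : G3 ≠ 0) (nG6 : G6 ≠ 0) (nF1 : F1 ≠ 0) (nF2 : F2 ≠ 0)
    (hx1 : xr + 1 ≠ 0) (hb0x : b0 + 1 + xr ≠ 0) (hb1Nx : b1 + 1 + Nr + xr ≠ 0)
    (hNx : Nr - xr ≠ 0)
    (d1 : 2*xr + b1 ≠ 0) (d2 : 2*xr + b1 + 1 ≠ 0)
    (d1' : 2*(xr+1) + b1 ≠ 0) :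
    G1*G2/(F1*G3) * ((b2-b1+Nr-xr-1)*G4 * G5 / ((Nr-xr)*F2 * G6)) * (b1+2*xr)
      * ((xr+b1-b0)*(xr+b1)*(xr+b2+Nr)*(Nr-xr)/((2*xr+b1)*(2*xr+b1+1)))
    = (b1-b0+xr)*G1*((b1+xr)*G2)/((xr+1)*F1*((b0+1+xr)*G3))
      * (G4 * ((b2+Nr+xr)*G5) / (F2 * ((b1+1+Nr+xr)*G6))) * (b1+2*(xr+1))
      * ((xr+1)*(xr+1+b0)*(Nr-(xr+1)+b2-b1)*(Nr+(xr+1)+b1)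
          /((2*(xr+1)+b1)*(2*(xr+1)+b1-1))) := by
  have e : (2*(xr+1)+b1-1) = 2*xr+b1+1 := by ring
  rw [e]
  rw [div_mul_div_comm, div_mul_eq_mul_div, div_mul_div_comm, div_mul_div_comm, div_mul_eq_mul_div, div_mul_div_comm, div_eq_div_iff (by simp_all) (by simp_all)]
  ring

set_option maxHeartbeats 1600000 in
/-- The one-dimensional Racah difference operator
`L f(x) = A₊(x)(f(x+1)-f(x)) - A₋(x)(f(x)-f(x-1))` is self-adjoint with respect
to the Racah weight `ρ` on `{0,1,…,N}`. -/
theorem racah_operator_selfadjoint_one_dim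
    (N : ℕ) (b0 b1 b2 : ℝ)
    (hb0 : -1 < b0) (h01 : b0 < b1) (hb1 : 0 < b1) (h12 : b1 < b2)
    (hden : ∀ x : ℕ, x ≤ N →
      2 * (x : ℝ) + b1 ≠ 0 ∧ 2 * (x : ℝ) + b1 + 1 ≠ 0 ∧ 2 * (x : ℝ) + b1 - 1 ≠ 0)
    (ρ : ℤ → ℝ)
    (hρ : ∀ x : ℕ, x ≤ N → ρ (x : ℤ) =
      Real.Gamma (b1 - b0 + (x : ℝ)) * Real.Gamma (b1 + (x : ℝ))
        / ((Nat.factorial x : ℝ) * Real.Gamma (b0 + 1 + (x : ℝ)))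
      * (Real.Gamma (b2 - b1 + (N : ℝ) - (x : ℝ)) * Real.Gamma (b2 + (N : ℝ) + (x : ℝ))
          / ((Nat.factorial (N - x) : ℝ) * Real.Gamma (b1 + 1 + (N : ℝ) + (x : ℝ))))
      * (b1 + 2 * (x : ℝ)))
    (Ap Am : ℤ → ℝ)
    (hAp : ∀ x : ℤ, Ap x =
      ((x : ℝ) + b1 - b0) * ((x : ℝ) + b1) * ((x : ℝ) + b2 + (N : ℝ)) * ((N : ℝ) - (x : ℝ))
        / ((2 * (x : ℝ) + b1) * (2 * (x : ℝ) + b1 + 1)))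
    (hAm : ∀ x : ℤ, Am x =
      (x : ℝ) * ((x : ℝ) + b0) * ((N : ℝ) - (x : ℝ) + b2 - b1) * ((N : ℝ) + (x : ℝ) + b1)
        / ((2 * (x : ℝ) + b1) * (2 * (x : ℝ) + b1 - 1))) :
    ∀ f g : ℤ → ℝ,
      ∑ x ∈ Finset.range (N + 1),
          (Ap (x : ℤ) * (f ((x : ℤ) + 1) - f (x : ℤ))
            - Am (x : ℤ) * (f (x : ℤ) - f ((x : ℤ) - 1))) * g (x : ℤ) * ρ (x : ℤ)
        = ∑ x ∈ Finset.range (N + 1),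
            f (x : ℤ) * (Ap (x : ℤ) * (g ((x : ℤ) + 1) - g (x : ℤ))
              - Am (x : ℤ) * (g (x : ℤ) - g ((x : ℤ) - 1))) * ρ (x : ℤ) := by
  -- key identity: ρ(x) A₊(x) = ρ(x+1) A₋(x+1)
  have key : ∀ x : ℕ, x + 1 ≤ N →
      ρ (x : ℤ) * Ap (x : ℤ) = ρ ((x + 1 : ℕ) : ℤ) * Am ((x + 1 : ℕ) : ℤ) := by
    intro x hx
    have hxN : x ≤ N := by omega
    have hxr : (0:ℝ) ≤ (x:ℝ) := by positivity
    have hNx : (x:ℝ) + 1 ≤ (N:ℝ) := by exact_mod_cast hx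
    rw [hρ x hxN, hρ (x+1) hx, hAp (x:ℤ), hAm ((x+1:ℕ):ℤ)]
    push_cast
    -- Gamma recurrences
    have g1 : Real.Gamma (b1 - b0 + ((x:ℝ) + 1)) = (b1 - b0 + x) * Real.Gamma (b1 - b0 + x) := by
      rw [show b1 - b0 + ((x:ℝ) + 1) = (b1 - b0 + x) + 1 by ring,
        Real.Gamma_add_one (by nlinarith)]
    have g2 : Real.Gamma (b1 + ((x:ℝ) + 1)) = (b1 + x) * Real.Gamma (b1 + x) := by
      rw [show b1 + ((x:ℝ) + 1) = (b1 + x) + 1 by ring, Real.Gamma_add_one (by nlinarith)]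
    have g3 : Real.Gamma (b0 + 1 + ((x:ℝ) + 1)) = (b0 + 1 + x) * Real.Gamma (b0 + 1 + x) := by
      rw [show b0 + 1 + ((x:ℝ) + 1) = (b0 + 1 + x) + 1 by ring,
        Real.Gamma_add_one (by nlinarith)]
    have g4 : Real.Gamma (b2 - b1 + (N:ℝ) - x)
        = (b2 - b1 + N - x - 1) * Real.Gamma (b2 - b1 + (N:ℝ) - ((x:ℝ) + 1)) := by
      rw [show b2 - b1 + (N:ℝ) - (x:ℝ) = (b2 - b1 + (N:ℝ) - ((x:ℝ)+1)) + 1 by ring,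
        Real.Gamma_add_one (by nlinarith)]
      ring
    have g5 : Real.Gamma (b2 + (N:ℝ) + ((x:ℝ) + 1)) = (b2 + N + x) * Real.Gamma (b2 + (N:ℝ) + x) := by
      rw [show b2 + (N:ℝ) + ((x:ℝ) + 1) = (b2 + (N:ℝ) + x) + 1 by ring,
        Real.Gamma_add_one (by nlinarith)]
    have g6 : Real.Gamma (b1 + 1 + (N:ℝ) + ((x:ℝ) + 1))
        = (b1 + 1 + N + x) * Real.Gamma (b1 + 1 + (N:ℝ) + x) := by
      rw [show b1 + 1 + (N:ℝ) + ((x:ℝ) + 1) = (b1 + 1 + (N:ℝ) + x) + 1 by ring,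
        Real.Gamma_add_one (by nlinarith)]
    -- factorials
    have hf1 : (Nat.factorial (x+1) : ℝ) = ((x:ℝ) + 1) * (Nat.factorial x : ℝ) := by
      rw [Nat.factorial_succ]; push_cast; ring
    have hsub : N - x = (N - (x+1)) + 1 := by omega
    have hf2 : (Nat.factorial (N - x) : ℝ)
        = ((N:ℝ) - x) * (Nat.factorial (N - (x+1)) : ℝ) := by
      rw [hsub, Nat.factorial_succ]
      have h' : ((N - (x+1) : ℕ) : ℝ) = (N:ℝ) - x - 1 := by
        rw [Nat.cast_sub hx]; push_cast; ring
      push_cast [h']; ring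
    rw [g1, g2, g3, g4, g5, g6, hf1, hf2]
    set G1 := Real.Gamma (b1 - b0 + (x:ℝ)) with hG1
    set G2 := Real.Gamma (b1 + (x:ℝ)) with hG2
    set G3 := Real.Gamma (b0 + 1 + (x:ℝ)) with hG3
    set G4 := Real.Gamma (b2 - b1 + (N:ℝ) - ((x:ℝ) + 1)) with hG4
    set G5 := Real.Gamma (b2 + (N:ℝ) + (x:ℝ)) with hG5
    set G6 := Real.Gamma (b1 + 1 + (N:ℝ) + (x:ℝ)) with hG6
    set F1 := (Nat.factorial x : ℝ) with hF1
    set F2 := (Nat.factorial (N - (x+1)) : ℝ) with hF2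
    -- nonvanishing facts
    obtain ⟨d1, d2, _⟩ := hden x hxN
    obtain ⟨d1', d2', d3'⟩ := hden (x+1) hx
    push_cast at d1' d2' d3'
    have nG3 : G3 ≠ 0 := (Real.Gamma_pos_of_pos (by nlinarith)).ne'
    have nG6 : G6 ≠ 0 := (Real.Gamma_pos_of_pos (by nlinarith)).ne'
    have nF1 : F1 ≠ 0 := by rw [hF1]; positivity
    have nF2 : F2 ≠ 0 := by rw [hF2]; positivity
    have hx1 : ((x:ℝ) + 1) ≠ 0 := by positivity
    exact racah_alg_aux b0 b1 b2 (x:ℝ) (N:ℝ) G1 G2 G3 G4 G5 G6 F1 F2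
      nG3 nG6 nF1 nF2 hx1 (by nlinarith) (by nlinarith)
      (by intro h; nlinarith [sub_eq_zero.mp h]) d1 d2 d1'
  -- boundary vanishing
  have hApN : Ap (N : ℤ) = 0 := by rw [hAp]; push_cast; simp
  have hAm0 : Am ((0:ℕ) : ℤ) = 0 := by rw [hAm]; push_cast; simp
  -- summation by parts to a symmetric form
  have main : ∀ f g : ℤ → ℝ,
      (∑ x ∈ Finset.range (N + 1),
          (Ap (x : ℤ) * (f ((x : ℤ) + 1) - f (x : ℤ))
            - Am (x : ℤ) * (f (x : ℤ) - f ((x : ℤ) - 1))) * g (x : ℤ) * ρ (x : ℤ))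
      = ∑ x ∈ Finset.range N,
          ρ (x : ℤ) * Ap (x : ℤ) * (f ((x : ℤ) + 1) - f (x : ℤ))
            * (g (x : ℤ) - g ((x : ℤ) + 1)) := by
    intro f g
    have hsplit : (∑ x ∈ Finset.range (N + 1),
        (Ap (x : ℤ) * (f ((x : ℤ) + 1) - f (x : ℤ))
          - Am (x : ℤ) * (f (x : ℤ) - f ((x : ℤ) - 1))) * g (x : ℤ) * ρ (x : ℤ))
        = (∑ x ∈ Finset.range (N + 1),
            Ap (x : ℤ) * (f ((x : ℤ) + 1) - f (x : ℤ)) * g (x : ℤ) * ρ (x : ℤ))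
          - ∑ x ∈ Finset.range (N + 1),
            Am (x : ℤ) * (f (x : ℤ) - f ((x : ℤ) - 1)) * g (x : ℤ) * ρ (x : ℤ) := by
      rw [← Finset.sum_sub_distrib]
      exact Finset.sum_congr rfl fun x _ => by ring
    rw [hsplit, Finset.sum_range_succ, Finset.sum_range_succ'
      (fun x : ℕ => Am (x : ℤ) * (f (x : ℤ) - f ((x : ℤ) - 1)) * g (x : ℤ) * ρ (x : ℤ)) N]
    rw [hApN, hAm0]
    simp only [zero_mul, mul_zero, add_zero, sub_zero]
    rw [← Finset.sum_sub_distrib]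
    refine Finset.sum_congr rfl fun x hx => ?_
    have hxN : x + 1 ≤ N := Finset.mem_range.mp hx
    have hk := key x hxN
    push_cast at hk ⊢
    simp only [add_sub_cancel_right]
    linear_combination (f ((x:ℤ) + 1) - f (x:ℤ)) * g ((x:ℤ) + 1) * hk
  intro f g
  rw [main f g]
  have : (∑ x ∈ Finset.range (N + 1),
      f (x : ℤ) * (Ap (x : ℤ) * (g ((x : ℤ) + 1) - g (x : ℤ))
        - Am (x : ℤ) * (g (x : ℤ) - g ((x : ℤ) - 1))) * ρ (x : ℤ))
      = ∑ x ∈ Finset.range (N + 1),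
        (Ap (x : ℤ) * (g ((x : ℤ) + 1) - g (x : ℤ))
          - Am (x : ℤ) * (g (x : ℤ) - g ((x : ℤ) - 1))) * f (x : ℤ) * ρ (x : ℤ) :=
    Finset.sum_congr rfl fun x _ => by ring
  rw [this, main g f]
  exact Finset.sum_congr rfl fun x _ => by ring
end

section
/- For the one-dimensional Racah operator L = A₊(x)Δ - A₋(x)∇ with A₊(x) = (x+β₁-β₀)(x+β₁)(x+β₂+N)(N-x)/((2x+β₁)(2x+β₁+1)) and A₋(x) = x(x+β₀)(N-x+β₂-β₁)(N+x+β₁)/((2x+β₁)(2x+β₁-1)), and λ(x) = x(x+β₁): for every n ∈ ℕ₀, L(λⁿ) is a polynomial in λ of degree at most n, and L(λⁿ) = -n(n-1+β₂-β₀)·λⁿ + (a polynomial in λ of degree ≤ n-1). -/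
open Polynomial

/-- The pair `(aₙ, bₙ)` of auxiliary polynomials for the Racah operator. -/
noncomputable def racahAB (c0 c1 c2 M : ℝ) : ℕ → Polynomial ℝ × Polynomial ℝ
  | 0 => (C (-2 : ℝ) * X ^ 2
            + C (2*M^2 + 2*c2*M - c1*c2 + 2*c0*c2 - c0*c1) * X
            + C (c1^2*M^2 + c1^2*c2*M - c0*c1*M^2 - c0*c1*c2*M),
          C (c0 - c2) * X + C (c1*M^2 + c1*c2*M - c0*M^2 - c0*c2*M))
  | n+1 =>
      let p := racahAB c0 c1 c2 M n
      (X * p.1 + p.1 + C (4:ℝ) * (X * p.2) + C (c1^2) * p.2,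
       p.1 + (X * p.2 + p.2))

/-- The polynomial `qₙ` with `L(λⁿ) = qₙ(λ)`. -/
noncomputable def racahQ (c0 c1 c2 M : ℝ) : ℕ → Polynomial ℝ
  | 0 => 0
  | n+1 => X * racahQ c0 c1 c2 M n + (racahAB c0 c1 c2 M n).2

lemma racahAB_key (c0 c1 c2 M : ℝ) : ∀ n : ℕ, ∀ x : ℝ,
    ((x + c1 - c0) * (x + c1) * (x + c2 + M) * (M - x)) * ((x + 1) * (x + 1 + c1)) ^ n
      + (x * (x + c0) * (M - x + c2 - c1) * (M + x + c1)) * ((x - 1) * (x - 1 + c1)) ^ n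
      = (racahAB c0 c1 c2 M n).1.eval (x * (x + c1))
    ∧ ((x + c1 - c0) * (x + c1) * (x + c2 + M) * (M - x)) * ((x + 1) * (x + 1 + c1)) ^ n
      - (x * (x + c0) * (M - x + c2 - c1) * (M + x + c1)) * ((x - 1) * (x - 1 + c1)) ^ n
      = (2 * x + c1) * (racahAB c0 c1 c2 M n).2.eval (x * (x + c1)) := by
  intro n
  induction n with
  | zero =>
      intro x
      constructor <;> · simp [racahAB]; ring
  | succ n ih =>
      intro x
      obtain ⟨ha, hb⟩ := ih x
      constructor
      · simp only [racahAB, eval_add, eval_mul, eval_X, eval_C]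
        linear_combination (x * (x + c1) + 1) * ha + (2 * x + c1) * hb
      · simp only [racahAB, eval_add, eval_mul, eval_X, eval_C]
        linear_combination (x * (x + c1) + 1) * hb + (2 * x + c1) * ha

lemma racahQ_key (c0 c1 c2 M : ℝ) : ∀ n : ℕ, ∀ x : ℝ,
    ((x + c1 - c0) * (x + c1) * (x + c2 + M) * (M - x)) * (2 * x + c1 - 1)
        * (((x + 1) * (x + 1 + c1)) ^ n - (x * (x + c1)) ^ n)
      - (x * (x + c0) * (M - x + c2 - c1) * (M + x + c1)) * (2 * x + c1 + 1)
        * ((x * (x + c1)) ^ n - ((x - 1) * (x - 1 + c1)) ^ n)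
      = (racahQ c0 c1 c2 M n).eval (x * (x + c1))
          * ((2 * x + c1) * (2 * x + c1 + 1) * (2 * x + c1 - 1)) := by
  intro n
  induction n with
  | zero => intro x; simp [racahQ]
  | succ n ih =>
      intro x
      have hb := (racahAB_key c0 c1 c2 M n x).2
      simp only [racahQ, eval_add, eval_mul, eval_X]
      linear_combination (x * (x + c1)) * ih x
        + ((2 * x + c1 + 1) * (2 * x + c1 - 1)) * hb

lemma racahAB_degree (c0 c1 c2 M : ℝ) : ∀ n : ℕ,
    (racahAB c0 c1 c2 M n).1.degree ≤ (n + 2 : ℕ)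
    ∧ (racahAB c0 c1 c2 M n).2.degree ≤ (n + 1 : ℕ) := by
  intro n
  induction n with
  | zero =>
      constructor
      · exact degree_quadratic_le
      · exact degree_linear_le
  | succ n ih =>
      obtain ⟨ha, hb⟩ := ih
      have hx : (X : Polynomial ℝ).degree ≤ 1 := degree_X_le
      constructor
      · simp only [racahAB]
        refine le_trans (degree_add_le _ _) (max_le (le_trans (degree_add_le _ _)
          (max_le (le_trans (degree_add_le _ _) (max_le ?_ ?_)) ?_)) ?_)
        · refine le_trans (degree_mul_le _ _) ?_
          calc (X : Polynomial ℝ).degree + (racahAB c0 c1 c2 M n).1.degree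
              ≤ 1 + ((n : ℕ) + 2 : ℕ) := add_le_add hx ha
            _ ≤ ((n + 1 + 2 : ℕ) : WithBot ℕ) := by
                norm_cast; omega
        · exact le_trans ha (by norm_cast; omega)
        · refine le_trans (degree_mul_le _ _) ?_
          refine le_trans (add_le_add degree_C_le (le_trans (degree_mul_le _ _)
            (add_le_add hx hb))) ?_
          simp only [zero_add]
          calc ((1 : WithBot ℕ) + ((n : ℕ) + 1 : ℕ)) = ((n + 2 : ℕ) : WithBot ℕ) := by
                norm_cast; omega
            _ ≤ ((n + 1 + 2 : ℕ) : WithBot ℕ) := by exact_mod_cast (by omega : n + 2 ≤ n + 1 + 2)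
        · refine le_trans (degree_mul_le _ _) (le_trans (add_le_add degree_C_le hb) ?_)
          rw [zero_add]
          exact_mod_cast (by omega : n + 1 ≤ n + 1 + 2)
      · simp only [racahAB]
        refine le_trans (degree_add_le _ _) (max_le ?_ (le_trans (degree_add_le _ _)
          (max_le ?_ ?_)))
        · exact le_trans ha (by norm_cast)
        · refine le_trans (degree_mul_le _ _) ?_
          calc (X : Polynomial ℝ).degree + (racahAB c0 c1 c2 M n).2.degree
              ≤ 1 + ((n : ℕ) + 1 : ℕ) := add_le_add hx hb
            _ ≤ ((n + 1 + 1 : ℕ) : WithBot ℕ) := by norm_cast; omega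
        · exact le_trans hb (by norm_cast; omega)

lemma racahQ_degree (c0 c1 c2 M : ℝ) : ∀ n : ℕ,
    (racahQ c0 c1 c2 M n).degree ≤ (n : ℕ) := by
  intro n
  induction n with
  | zero => simp [racahQ]
  | succ n ih =>
      simp only [racahQ]
      refine le_trans (degree_add_le _ _) (max_le ?_ ?_)
      · refine le_trans (degree_mul_le _ _) ?_
        calc (X : Polynomial ℝ).degree + (racahQ c0 c1 c2 M n).degree
            ≤ 1 + (n : ℕ) := add_le_add degree_X_le ih
          _ ≤ (((n + 1 : ℕ)) : WithBot ℕ) := by norm_cast; omega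
      · exact le_trans (racahAB_degree c0 c1 c2 M n).2 (by norm_cast)

lemma racahAB_coeff (c0 c1 c2 M : ℝ) : ∀ n : ℕ,
    (racahAB c0 c1 c2 M n).1.coeff (n + 2) = -2
    ∧ (racahAB c0 c1 c2 M n).2.coeff (n + 1) = -(2 * (n : ℝ) + c2 - c0) := by
  intro n
  induction n with
  | zero =>
      constructor
      · simp only [racahAB, coeff_add, coeff_C_mul, coeff_X_pow, coeff_X, coeff_C]
        norm_num
      · simp only [racahAB, coeff_add, coeff_C_mul, coeff_X, coeff_C]
        norm_num
  | succ n ih =>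
      obtain ⟨ha, hb⟩ := ih
      have hda : (racahAB c0 c1 c2 M n).1.coeff (n + 3) = 0 := by
        refine coeff_eq_zero_of_degree_lt (lt_of_le_of_lt (racahAB_degree c0 c1 c2 M n).1 ?_)
        exact_mod_cast (by omega : n + 2 < n + 3)
      have hdb1 : (racahAB c0 c1 c2 M n).2.coeff (n + 2) = 0 := by
        refine coeff_eq_zero_of_degree_lt (lt_of_le_of_lt (racahAB_degree c0 c1 c2 M n).2 ?_)
        exact_mod_cast (by omega : n + 1 < n + 2)
      have hdb2 : (racahAB c0 c1 c2 M n).2.coeff (n + 3) = 0 := by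
        refine coeff_eq_zero_of_degree_lt (lt_of_le_of_lt (racahAB_degree c0 c1 c2 M n).2 ?_)
        exact_mod_cast (by omega : n + 1 < n + 3)
      constructor
      · have : n + 1 + 2 = (n + 2) + 1 := by omega
        rw [this]
        simp only [racahAB, coeff_add, coeff_C_mul, coeff_X_mul]
        have h2 : (n + 2) + 1 = n + 3 := by omega
        rw [h2, ha, hda, hdb1, hdb2]
        ring
      · have : n + 1 + 1 = (n + 1) + 1 := rfl
        simp only [racahAB, coeff_add, coeff_X_mul]
        rw [ha, hb]
        have h2 : (n + 1) + 1 = n + 2 := rfl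
        rw [h2, hdb1]
        push_cast
        ring

lemma racahQ_coeff (c0 c1 c2 M : ℝ) : ∀ n : ℕ,
    (racahQ c0 c1 c2 M n).coeff n = -(n : ℝ) * ((n : ℝ) - 1 + c2 - c0) := by
  intro n
  induction n with
  | zero => simp [racahQ]
  | succ n ih =>
      simp only [racahQ, coeff_add, coeff_X_mul]
      rw [ih, (racahAB_coeff c0 c1 c2 M n).2]
      push_cast
      ring

/-- For the one-dimensional Racah operator `L = A₊ Δ - A₋ ∇` and
`λ(x) = x(x+β₁)`, the function `L(λⁿ)` is a polynomial in `λ` of degree at most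
`n`, with coefficient of `λⁿ` equal to `-n(n-1+β₂-β₀)`. -/
theorem racah_operator_triangular_one_dim
    (b0 b1 b2 N : ℝ) (n : ℕ) :
    ∃ q : Polynomial ℝ, q.degree ≤ (n : ℕ)
      ∧ q.coeff n = -(n : ℝ) * ((n : ℝ) - 1 + b2 - b0)
      ∧ ∀ x : ℝ, 2 * x + b1 ≠ 0 → 2 * x + b1 + 1 ≠ 0 → 2 * x + b1 - 1 ≠ 0 →
          ((x + b1 - b0) * (x + b1) * (x + b2 + N) * (N - x)
              / ((2 * x + b1) * (2 * x + b1 + 1)))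
            * (((x + 1) * (x + 1 + b1)) ^ n - (x * (x + b1)) ^ n)
          - (x * (x + b0) * (N - x + b2 - b1) * (N + x + b1)
              / ((2 * x + b1) * (2 * x + b1 - 1)))
            * ((x * (x + b1)) ^ n - ((x - 1) * (x - 1 + b1)) ^ n)
          = q.eval (x * (x + b1)) := by
  refine ⟨racahQ b0 b1 b2 N n, racahQ_degree b0 b1 b2 N n, racahQ_coeff b0 b1 b2 N n, ?_⟩
  intro x h1 h2 h3
  have hd1 : (2 * x + b1) * (2 * x + b1 + 1) ≠ 0 := mul_ne_zero h1 h2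
  have hd2 : (2 * x + b1) * (2 * x + b1 - 1) ≠ 0 := mul_ne_zero h1 h3
  have K := racahQ_key b0 b1 b2 N n x
  rw [div_mul_eq_mul_div, div_mul_eq_mul_div, div_sub_div _ _ hd1 hd2,
    div_eq_iff (mul_ne_zero hd1 hd2)]
  linear_combination (2 * x + b1) * K
end
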